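/- Let (g,h,rho,psi) be a matched pair of 3-Lie algebras and (V,W,alpha,beta) a representation of it. For every pair of linear maps N1 : g -> V and N2 : h -> W, the 2-cochain D1(N1,N2) is a 2-cocycle; in particular, every 2-coboundary is a 2-cocycle, so the second cohomology group H2_MPL(g,h;V,W) is well defined as the quotient of 2-cocycles by 2-coboundaries. -/
import Mathlib


/-- A 3-Lie algebra over `k`: an alternating trilinear bracket satisfying the
fundamental (Jacobi/Filippov) identity. -/
structure ThreeLie (k : Type*) (g : Type*) [CommRing k] [AddCommGroup g] [Module k g] where
  br : g →ₗ[k] g →ₗ[k] g →ₗ[k] g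
  alt₁ : ∀ x y, br x x y = 0
  alt₂ : ∀ x y, br x y y = 0
  fund : ∀ x1 x2 y1 y2 y3,
    br x1 x2 (br y1 y2 y3) =
      br (br x1 x2 y1) y2 y3 + br y1 (br x1 x2 y2) y3 + br y1 y2 (br x1 x2 y3)

/-- A representation of a 3-Lie algebra `(g, L)` on a module `V`. -/
structure Rep3 (k : Type*) (g V : Type*) [CommRing k] [AddCommGroup g] [Module k g]
    [AddCommGroup V] [Module k V] (L : ThreeLie k g) where
  ρ : g →ₗ[k] g →ₗ[k] Module.End k V
  skew : ∀ x, ρ x x = 0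
  rep1 : ∀ x1 x2 x3 x4 v, ρ x1 x2 (ρ x3 x4 v) =
    ρ x3 x4 (ρ x1 x2 v) + ρ (L.br x1 x2 x3) x4 v + ρ x3 (L.br x1 x2 x4) v
  rep2 : ∀ x1 x2 x3 x4 v, ρ (L.br x1 x2 x3) x4 v =
    ρ x1 x2 (ρ x3 x4 v) + ρ x2 x3 (ρ x1 x4 v) + ρ x3 x1 (ρ x2 x4 v)

/-- A matched pair of 3-Lie algebras `(g, h, ρ, ψ)`. -/
structure MatchedPair (k : Type*) (g h : Type*) [CommRing k] [AddCommGroup g] [Module k g]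
    [AddCommGroup h] [Module k h] where
  Lg : ThreeLie k g
  Lh : ThreeLie k h
  ρ : Rep3 k g h Lg
  ψ : Rep3 k h g Lh
  mp1 : ∀ a4 a5 x1 x2 x3, ψ.ρ a4 a5 (Lg.br x1 x2 x3) =
    Lg.br (ψ.ρ a4 a5 x1) x2 x3 + Lg.br x1 (ψ.ρ a4 a5 x2) x3 + Lg.br x1 x2 (ψ.ρ a4 a5 x3)
  mp2 : ∀ x1 x2 x4 a3 a5, ψ.ρ (ρ.ρ x1 x2 a3) a5 x4 =
    ψ.ρ (ρ.ρ x1 x4 a5) a3 x2 - ψ.ρ (ρ.ρ x2 x4 a5) a3 x1 + Lg.br x1 x2 (ψ.ρ a3 a5 x4)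
  mp3 : ∀ a2 a3 x1 x4 x5, Lg.br (ψ.ρ a2 a3 x1) x4 x5 =
    ψ.ρ a2 a3 (Lg.br x1 x4 x5) + ψ.ρ (ρ.ρ x4 x5 a2) a3 x1 + ψ.ρ a2 (ρ.ρ x4 x5 a3) x1
  mp4 : ∀ x4 x5 a1 a2 a3, ρ.ρ x4 x5 (Lh.br a1 a2 a3) =
    Lh.br (ρ.ρ x4 x5 a1) a2 a3 + Lh.br a1 (ρ.ρ x4 x5 a2) a3 + Lh.br a1 a2 (ρ.ρ x4 x5 a3)
  mp5 : ∀ a1 a2 a4 x3 x5, ρ.ρ (ψ.ρ a1 a2 x3) x5 a4 =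
    ρ.ρ (ψ.ρ a1 a4 x5) x3 a2 - ρ.ρ (ψ.ρ a2 a4 x5) x3 a1 + Lh.br a1 a2 (ρ.ρ x3 x5 a4)
  mp6 : ∀ x2 x3 a1 a4 a5, Lh.br (ρ.ρ x2 x3 a1) a4 a5 =
    ρ.ρ x2 x3 (Lh.br a1 a4 a5) + ρ.ρ (ψ.ρ a4 a5 x2) x3 a1 + ρ.ρ x2 (ψ.ρ a4 a5 x3) a1

section MPRepSec

variable (k : Type*) (g h V W : Type*) [CommRing k]
  [AddCommGroup g] [Module k g] [AddCommGroup h] [Module k h]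
  [AddCommGroup V] [Module k V] [AddCommGroup W] [Module k W]

/-- The raw data of a representation of a matched pair of 3-Lie algebras. -/
structure MPRepData where
  ρV : g →ₗ[k] g →ₗ[k] Module.End k V
  ψV : h →ₗ[k] h →ₗ[k] Module.End k V
  ρW : g →ₗ[k] g →ₗ[k] Module.End k W
  ψW : h →ₗ[k] h →ₗ[k] Module.End k W
  A : V →ₗ[k] g →ₗ[k] h →ₗ[k] W
  B : W →ₗ[k] h →ₗ[k] g →ₗ[k] V

variable {k g h V W}

/-- A representation `(V, W, α, β)` of a matched pair of 3-Lie algebras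
`(g, h, ρ, ψ)` (Definition 2.3 of arXiv:2508.14044). -/
structure MPRep (M : MatchedPair k g h) where
  rV : Rep3 k g V M.Lg
  pV : Rep3 k h V M.Lh
  rW : Rep3 k g W M.Lg
  pW : Rep3 k h W M.Lh
  A : V →ₗ[k] g →ₗ[k] h →ₗ[k] W
  B : W →ₗ[k] h →ₗ[k] g →ₗ[k] V
  iden1 : ∀ a1 a2 x2 x3 v1, pV.ρ a1 a2 (rV.ρ x2 x3 v1) =
    rV.ρ (M.ψ.ρ a1 a2 x2) x3 v1 + rV.ρ x2 (M.ψ.ρ a1 a2 x3) v1 + rV.ρ x2 x3 (pV.ρ a1 a2 v1)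
  iden2 : ∀ a1 a2 x1 x3 v2, pV.ρ a1 a2 (rV.ρ x1 x3 v2) =
    rV.ρ (M.ψ.ρ a1 a2 x1) x3 v2 + rV.ρ x1 (M.ψ.ρ a1 a2 x3) v2 + rV.ρ x1 x3 (pV.ρ a1 a2 v2)
  iden3 : ∀ a1 a2 x1 x2 v3, pV.ρ a1 a2 (rV.ρ x1 x2 v3) =
    rV.ρ (M.ψ.ρ a1 a2 x1) x2 v3 + rV.ρ x1 (M.ψ.ρ a1 a2 x2) v3 + rV.ρ x1 x2 (pV.ρ a1 a2 v3)
  iden4 : ∀ w1 w2 a1 a2 x1 x2 x3,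
    B w1 a2 (M.Lg.br x1 x2 x3) - B w2 a1 (M.Lg.br x1 x2 x3) =
      rV.ρ x2 x3 (B w1 a2 x1 - B w2 a1 x1) + rV.ρ x1 x3 (B w1 a2 x2 - B w2 a1 x2)
      + rV.ρ x1 x2 (B w1 a2 x3 - B w2 a1 x3)
  iden5 : ∀ x2 x3 a1 a2 v1, rV.ρ x2 (M.ψ.ρ a1 a2 x3) v1 = pV.ρ (M.ρ.ρ x2 x3 a2) a1 v1
  iden6 : ∀ x1 x3 a1 a2 v2, rV.ρ x1 (M.ψ.ρ a1 a2 x3) v2 = pV.ρ (M.ρ.ρ x1 x3 a2) a1 v2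
  iden7 : ∀ x1 x2 a1 a2 v3, rV.ρ x1 x2 (pV.ρ a1 a2 v3) = pV.ρ (M.ρ.ρ x1 x2 a1) a2 v3
  iden8 : ∀ x1 x2 x3 a1 a2 v1 v2 v3 w1 w2,
    rV.ρ x1 x2 (B w1 a2 x3 - B w2 a1 x3) =
      B (rW.ρ x2 x3 w2 + A v2 x3 a2 - A v3 x1 a2) a1 x1 - B w1 (M.ρ.ρ x2 x3 a2) x1
      - B (rW.ρ x1 x3 w2 + A v1 x3 a2 - A v3 x1 a2) a1 x2 + B w1 (M.ρ.ρ x1 x3 a2) x2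
      + B (rW.ρ x1 x2 w1 + A v1 x2 a1 - A v2 x1 a1) a2 x3 - B w2 (M.ρ.ρ x1 x2 a1) x3
  iden9 : ∀ x2 x3 a1 a2 v1, rV.ρ x2 x3 (pV.ρ a1 a2 v1) =
    pV.ρ a1 a2 (rV.ρ x2 x3 v1) + pV.ρ (M.ρ.ρ x2 x3 a1) a2 v1 + pV.ρ a1 (M.ρ.ρ x2 x3 a2) v1
  iden10 : ∀ x1 x2 x3 a1 a2 v2 v3 w1 w2,
    rV.ρ x2 x3 (B w1 a2 x1 - B w2 a1 x1) =
      (B w1 a2 (M.Lg.br x1 x2 x3) - B w2 a1 (M.Lg.br x1 x2 x3))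
      - B w2 (M.ρ.ρ x2 x3 a1) x1 + B w1 (M.ρ.ρ x2 x3 a2) x1
      + B (rW.ρ x2 x3 w1 + A v2 x3 a1 - A v3 x2 a1) a2 x1
      - B (rW.ρ x2 x2 w2 + A v2 x3 a2 - A v3 x2 a2) a1 x1
  iden11 : ∀ a1 a2 x1 x3 v2, rV.ρ (M.ψ.ρ a1 a2 x1) x3 v2 = pV.ρ a1 a2 (rV.ρ x1 x3 v2)
  iden12 : ∀ a1 a2 x1 x2 v3, rV.ρ (M.ψ.ρ a1 a2 x1) x2 v3 = pV.ρ a1 a2 (rV.ρ x1 x2 v3)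
  iden13 : ∀ x1 x2 a2 a3 w1, rW.ρ x1 x2 (pW.ρ a2 a3 w1) =
    pW.ρ (M.ρ.ρ x1 x2 a2) a3 w1 + pW.ρ a2 (M.ρ.ρ x1 x2 a3) w1 + pW.ρ a2 a3 (rW.ρ x1 x2 w1)
  iden14 : ∀ x1 x2 a1 a3 w2, rW.ρ x1 x2 (pW.ρ a1 a3 w2) =
    pW.ρ (M.ρ.ρ x1 x2 a1) a3 w2 + pW.ρ a1 (M.ρ.ρ x1 x2 a3) w2 + pW.ρ a1 a3 (rW.ρ x1 x2 w2)
  iden15 : ∀ x1 x2 a1 a2 w3, rW.ρ x1 x2 (pW.ρ a1 a2 w3) =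
    pW.ρ (M.ρ.ρ x1 x2 a1) a2 w3 + pW.ρ a1 (M.ρ.ρ x1 x2 a2) w3 + pW.ρ a1 a2 (rW.ρ x1 x2 w3)
  iden16 : ∀ v1 v2 x1 x2 a1 a2 a3,
    A v1 x2 (M.Lh.br a1 a2 a3) - A v2 x1 (M.Lh.br a1 a2 a3) =
      pW.ρ a2 a3 (A v1 x2 a1 - A v2 x1 a1) + pW.ρ a1 a3 (A v1 x1 a2 + A v2 x2 a2)
      + pW.ρ a1 a2 (A v1 x2 a3 - A v2 x1 a3)
  iden17 : ∀ a2 a3 x1 x2 w1, pW.ρ a2 (M.ρ.ρ x1 x2 a3) w1 = rW.ρ (M.ψ.ρ a2 a3 x2) x1 w1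
  iden18 : ∀ a1 a3 x1 x2 w2, pW.ρ a1 (M.ρ.ρ x1 x2 a3) w2 = rW.ρ (M.ψ.ρ a1 a3 x2) x1 w2
  iden19 : ∀ a1 a2 x1 x2 w3, pW.ρ a1 a2 (rW.ρ x1 x2 w3) = rW.ρ (M.ψ.ρ a1 a2 x1) x2 w3
  iden20 : ∀ a1 a2 a3 x1 x2 v1 v2 w1 w2 w3,
    pW.ρ a1 a2 (A v1 x2 a3 - A v2 x1 a3) =
      A (pV.ρ a2 a3 v2 + B w2 a3 x2 - B w3 a1 x2) x1 a1 - A v1 (M.ψ.ρ a2 a3 x2) a1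
      - A (pV.ρ a1 a3 v2 + B w1 a3 x2 - B w3 a1 x2) x1 a2 + A v1 (M.ψ.ρ a1 a3 x2) a2
      + A (pV.ρ a1 a2 v1 + B w1 a2 x1 - B w2 a1 x1) x2 a3 - A v2 (M.ψ.ρ a1 a2 x1) a3
  iden21 : ∀ a2 a3 x1 x2 w1, pW.ρ a2 a3 (rW.ρ x1 x2 w1) =
    rW.ρ x1 x2 (pW.ρ a2 a3 w1) + rW.ρ (M.ψ.ρ a2 a3 x1) x2 w1 + rW.ρ x1 (M.ψ.ρ a2 a3 x2) w1
  iden22 : ∀ a1 a2 a3 x1 x2 v1 v2 w2 w3,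
    pW.ρ a2 a3 (A v1 x2 a1 - A v2 x1 a1) =
      (A v1 x2 (M.Lh.br a1 a2 a3) - A v2 x1 (M.Lh.br a1 a2 a3))
      - A v2 (M.ψ.ρ a2 a3 x1) a1 + A v1 (M.ψ.ρ a2 a3 x2) a1
      + A (pV.ρ a2 a3 v1 + B w2 a3 x1 - B w3 a2 x1) x2 a1
      - A (pV.ρ a2 a2 v2 + B w2 a3 x2 - B w3 a2 x2) x1 a1
  iden23 : ∀ x1 x2 a1 a3 w2, pW.ρ (M.ρ.ρ x1 x2 a1) a3 w2 = rW.ρ x1 x2 (pW.ρ a1 a3 w2)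
  iden24 : ∀ x1 x2 a1 a2 w3, pW.ρ (M.ρ.ρ x1 x2 a1) a2 w3 = rW.ρ x1 x2 (pW.ρ a1 a2 w3)

/-- Forget the axioms of a matched-pair representation. -/
def MPRep.toData {M : MatchedPair k g h} (R : MPRep (V := V) (W := W) M) :
    MPRepData k g h V W :=
  ⟨R.rV.ρ, R.pV.ρ, R.rW.ρ, R.pW.ρ, R.A, R.B⟩

end MPRepSec

/-- The adjoint representation data of a matched pair on itself. -/
def adjData {k g h : Type*} [CommRing k] [AddCommGroup g] [Module k g]
    [AddCommGroup h] [Module k h] (M : MatchedPair k g h) : MPRepData k g h g h :=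
  ⟨M.Lg.br, M.ψ.ρ, M.ρ.ρ, M.Lh.br, M.ρ.ρ, M.ψ.ρ⟩
section CochainSec

variable (k : Type*) (g h V W : Type*) [CommRing k]
  [AddCommGroup g] [Module k g] [AddCommGroup h] [Module k h]
  [AddCommGroup V] [Module k V] [AddCommGroup W] [Module k W]

/-- A 2-cochain `(ω, θ, ν, φ)` of a matched pair of 3-Lie algebras with
coefficients in a pair of modules `(V, W)`. -/
structure Cochain2 where
  ω : g →ₗ[k] g →ₗ[k] g →ₗ[k] V
  θ : h →ₗ[k] h →ₗ[k] h →ₗ[k] W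
  ν : g →ₗ[k] g →ₗ[k] h →ₗ[k] W
  φ : h →ₗ[k] h →ₗ[k] g →ₗ[k] V
  ω_alt₁ : ∀ x y, ω x x y = 0
  ω_alt₂ : ∀ x y, ω x y y = 0
  θ_alt₁ : ∀ a b, θ a a b = 0
  θ_alt₂ : ∀ a b, θ a b b = 0
  ν_skew : ∀ x, ν x x = 0
  φ_skew : ∀ a, φ a a = 0

variable {k g h V W}

instance : Sub (Cochain2 k g h V W) :=
  ⟨fun c d =>
    { ω := c.ω - d.ω
      θ := c.θ - d.θ
      ν := c.ν - d.ν
      φ := c.φ - d.φ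
      ω_alt₁ := by intro x y; simp [c.ω_alt₁, d.ω_alt₁]
      ω_alt₂ := by intro x y; simp [c.ω_alt₂, d.ω_alt₂]
      θ_alt₁ := by intro a b; simp [c.θ_alt₁, d.θ_alt₁]
      θ_alt₂ := by intro a b; simp [c.θ_alt₂, d.θ_alt₂]
      ν_skew := by intro x; simp [c.ν_skew, d.ν_skew]
      φ_skew := by intro a; simp [c.φ_skew, d.φ_skew] }⟩

/-- The eight 2-cocycle identities (2co-1)–(2co-8) of arXiv:2508.14044, with
coefficients in a representation (data) `R` of the matched pair `M`. -/
def IsCocycle2 (M : MatchedPair k g h) (R : MPRepData k g h V W)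
    (c : Cochain2 k g h V W) : Prop :=
  (∀ x1 x2 x3 x4 x5 : g,
    R.ρV x4 x5 (c.ω x1 x2 x3) + R.ρV x5 x3 (c.ω x1 x2 x4) + R.ρV x3 x4 (c.ω x1 x2 x5)
    + c.ω (M.Lg.br x1 x2 x3) x4 x5 + c.ω x3 (M.Lg.br x1 x2 x4) x5
    + c.ω x3 x4 (M.Lg.br x1 x2 x5)
    - R.ρV x1 x2 (c.ω x3 x4 x5) - c.ω x1 x2 (M.Lg.br x3 x4 x5) = 0) ∧
  (∀ (x1 x2 : g) (a1 a2 a3 : h),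
    R.ψW a2 a3 (c.ν x1 x2 a1) + R.ψW a3 a1 (c.ν x1 x2 a2) + R.ψW a1 a2 (c.ν x1 x2 a3)
    + c.θ (M.ρ.ρ x1 x2 a1) a2 a3 + c.θ a1 (M.ρ.ρ x1 x2 a2) a3 + c.θ a1 a2 (M.ρ.ρ x1 x2 a3)
    - R.ρW x1 x2 (c.θ a1 a2 a3) - c.ν x1 x2 (M.Lh.br a1 a2 a3) = 0) ∧
  (∀ (a1 a2 : h) (x1 x2 x3 : g),
    R.ρV x2 x3 (c.φ a1 a2 x1) + R.ρV x3 x1 (c.φ a1 a2 x2) + R.ρV x1 x2 (c.φ a1 a2 x3)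
    + c.ω (M.ψ.ρ a1 a2 x1) x2 x3 + c.ω x1 (M.ψ.ρ a1 a2 x2) x3 + c.ω x1 x2 (M.ψ.ρ a1 a2 x3)
    - R.ψV a1 a2 (c.ω x1 x2 x3) - c.φ a1 a2 (M.Lg.br x1 x2 x3) = 0) ∧
  (∀ (x1 x2 x3 : g) (a1 a2 : h),
    R.B (c.ν x1 x3 a2) a1 x2 + c.φ (M.ρ.ρ x1 x3 a2) a1 x2
    - R.B (c.ν x2 x3 a2) a1 x1 - c.φ (M.ρ.ρ x2 x3 a2) a1 x1
    + R.ρV x1 x2 (c.φ a1 a2 x3) + c.ω x1 x2 (M.ψ.ρ a1 a2 x3)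
    - R.B (c.ν x1 x2 a1) a2 x3 - c.φ (M.ρ.ρ x1 x2 a1) a2 x3 = 0) ∧
  (∀ (a1 a2 a3 : h) (x1 x2 : g),
    R.A (c.φ a1 a3 x2) x1 a2 + c.ν (M.ψ.ρ a1 a3 x2) x1 a2
    - R.A (c.φ a2 a3 x2) x1 a1 - c.ν (M.ψ.ρ a2 a3 x2) x1 a1
    + R.ψW a1 a2 (c.ν x1 x2 a3) + c.θ a1 a2 (M.ρ.ρ x1 x2 a3)
    - R.A (c.φ a1 a2 x1) x2 a3 - c.ν (M.ψ.ρ a1 a2 x1) x2 a3 = 0) ∧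
  (∀ (a1 a2 : h) (x1 x2 x3 : g),
    R.ψV a1 a2 (c.ω x1 x2 x3) + c.φ a1 a2 (M.Lg.br x1 x2 x3)
    + c.φ (M.ρ.ρ x2 x3 a1) a2 x1 + R.B (c.ν x2 x3 a1) a2 x1
    + c.φ a1 (M.ρ.ρ x2 x3 a2) x1 - R.B (c.ν x2 x3 a2) a1 x1
    - c.ω (M.ψ.ρ a1 a2 x1) x2 x3 - R.ρV x2 x3 (c.φ a1 a2 x1) = 0) ∧
  (∀ (x1 x2 : g) (a1 a2 a3 : h),
    R.ρW x1 x2 (c.θ a1 a2 a3) + c.ν x1 x2 (M.Lh.br a1 a2 a3)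
    + c.ν (M.ψ.ρ a2 a3 x1) x2 a1 + R.A (c.φ a2 a3 x1) x2 a1
    + c.ν x1 (M.ψ.ρ a2 a3 x2) a1 - R.A (c.φ a2 a3 x2) x1 a1
    - c.θ (M.ρ.ρ x1 x2 a1) a2 a3 - R.ψW a2 a3 (c.ν x1 x2 a1) = 0) ∧
  (∀ a1 a2 a3 a4 a5 : h,
    R.ψW a4 a5 (c.θ a1 a2 a3) + R.ψW a5 a3 (c.θ a1 a2 a4) + R.ψW a3 a4 (c.θ a1 a2 a5)
    + c.θ (M.Lh.br a1 a2 a3) a4 a5 + c.θ a3 (M.Lh.br a1 a2 a4) a5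
    + c.θ a3 a4 (M.Lh.br a1 a2 a5)
    - R.ψW a1 a2 (c.θ a3 a4 a5) - c.θ a1 a2 (M.Lh.br a3 a4 a5) = 0)

/-- `c` is the image under the differential `D₁` of the 1-cochain `(N1, N2)`. -/
def IsD1 (M : MatchedPair k g h) (R : MPRepData k g h V W)
    (N1 : g →ₗ[k] V) (N2 : h →ₗ[k] W) (c : Cochain2 k g h V W) : Prop :=
  (∀ x1 x2 x3, c.ω x1 x2 x3 =
    R.ρV x2 x3 (N1 x1) + R.ρV x3 x1 (N1 x2) + R.ρV x1 x2 (N1 x3) - N1 (M.Lg.br x1 x2 x3)) ∧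
  (∀ x1 x2 a, c.ν x1 x2 a =
    R.ρW x1 x2 (N2 a) - N2 (M.ρ.ρ x1 x2 a) + R.A (N1 x1) x2 a - R.A (N1 x2) x1 a) ∧
  (∀ a1 a2 x, c.φ a1 a2 x =
    R.ψV a1 a2 (N1 x) - N1 (M.ψ.ρ a1 a2 x) + R.B (N2 a1) a2 x - R.B (N2 a2) a1 x) ∧
  (∀ a1 a2 a3, c.θ a1 a2 a3 =
    R.ψW a2 a3 (N2 a1) + R.ψW a3 a1 (N2 a2) + R.ψW a1 a2 (N2 a3) - N2 (M.Lh.br a1 a2 a3))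

/-- `c` is a 2-coboundary. -/
def IsCoboundary (M : MatchedPair k g h) (R : MPRepData k g h V W)
    (c : Cochain2 k g h V W) : Prop :=
  ∃ (N1 : g →ₗ[k] V) (N2 : h →ₗ[k] W), IsD1 M R N1 N2 c

/-- Two 2-cochains are cohomologous if their difference is a 2-coboundary. -/
def Cohomologous (M : MatchedPair k g h) (R : MPRepData k g h V W)
    (c c' : Cochain2 k g h V W) : Prop :=
  IsCoboundary M R (c - c')

/-- The 1-cocycle conditions `D₁(ζ, η) = 0`. -/
def IsCocycle1 (M : MatchedPair k g h) (R : MPRepData k g h V W)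
    (ζ : g →ₗ[k] V) (η : h →ₗ[k] W) : Prop :=
  (∀ x1 x2 x3,
    R.ρV x2 x3 (ζ x1) + R.ρV x3 x1 (ζ x2) + R.ρV x1 x2 (ζ x3) = ζ (M.Lg.br x1 x2 x3)) ∧
  (∀ x1 x2 a,
    R.ρW x1 x2 (η a) - η (M.ρ.ρ x1 x2 a) + R.A (ζ x1) x2 a - R.A (ζ x2) x1 a = 0) ∧
  (∀ a1 a2 x,
    R.ψV a1 a2 (ζ x) - ζ (M.ψ.ρ a1 a2 x) + R.B (η a1) a2 x - R.B (η a2) a1 x = 0) ∧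
  (∀ a1 a2 a3,
    R.ψW a2 a3 (η a1) + R.ψW a3 a1 (η a2) + R.ψW a1 a2 (η a3) = η (M.Lh.br a1 a2 a3))

/-- The second cohomology group of a matched pair of 3-Lie algebras (as a quotient
of 2-cocycles by the relation of being cohomologous). -/
def H2MPL (M : MatchedPair k g h) (R : MPRepData k g h V W) :=
  Quot (fun c c' : {c : Cochain2 k g h V W // IsCocycle2 M R c} =>
    Cohomologous M R c.1 c'.1)

end CochainSec

section DualSec

variable {k : Type*} [CommRing k] {g : Type*} [AddCommGroup g] [Module k g]

/-- The `k[t]/(t²)`-module structure on `g[t]/(t²) = g × g`, where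
`(a + b t) • (x₀ + x₁ t) = a • x₀ + (a • x₁ + b • x₀) t`. -/
instance dualNumberModule : Module (DualNumber k) (g × g) where
  smul r x := (r.fst • x.1, r.fst • x.2 + r.snd • x.1)
  one_smul x := by
    show ((1 : DualNumber k).fst • x.1, (1 : DualNumber k).fst • x.2
      + (1 : DualNumber k).snd • x.1) = x
    simp
  mul_smul r s x := by
    show ((r * s).fst • x.1, (r * s).fst • x.2 + (r * s).snd • x.1)
      = (r.fst • (s.fst • x.1),
         r.fst • (s.fst • x.2 + s.snd • x.1) + r.snd • (s.fst • x.1))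
    ext
    · simp [TrivSqZeroExt.fst_mul, mul_smul]
    · simp only [TrivSqZeroExt.snd_mul, smul_eq_mul, MulOpposite.smul_eq_mul_unop,
        MulOpposite.unop_op, add_smul, mul_smul, TrivSqZeroExt.fst_mul, smul_add]
      abel
  smul_zero r := by
    show ((r : DualNumber k).fst • (0 : g), r.fst • (0 : g) + r.snd • (0 : g)) = 0
    simp
  smul_add r x y := by
    show (r.fst • (x.1 + y.1), r.fst • (x.2 + y.2) + r.snd • (x.1 + y.1))
      = ((r.fst • x.1, r.fst • x.2 + r.snd • x.1)
        + (r.fst • y.1, r.fst • y.2 + r.snd • y.1))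
    ext <;> (simp [smul_add]; try abel)
  add_smul r s x := by
    show ((r + s).fst • x.1, (r + s).fst • x.2 + (r + s).snd • x.1)
      = ((r.fst • x.1, r.fst • x.2 + r.snd • x.1)
        + (s.fst • x.1, s.fst • x.2 + s.snd • x.1))
    ext <;> (simp [add_smul]; try abel)
  zero_smul x := by
    show ((0 : DualNumber k).fst • x.1, (0 : DualNumber k).fst • x.2
      + (0 : DualNumber k).snd • x.1) = 0
    simp

end DualSec

section DeformSec

variable {k g h : Type*} [CommRing k] [AddCommGroup g] [Module k g]
  [AddCommGroup h] [Module k h]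

/-- The `t`-linear extension of the deformed bracket `[·,·,·] + t ω` on `g[t]/(t²)`. -/
def defBrG (M : MatchedPair k g h) (c : Cochain2 k g h g h) :
    g × g → g × g → g × g → g × g := fun X Y Z =>
  (M.Lg.br X.1 Y.1 Z.1,
   c.ω X.1 Y.1 Z.1 + M.Lg.br X.2 Y.1 Z.1 + M.Lg.br X.1 Y.2 Z.1 + M.Lg.br X.1 Y.1 Z.2)

/-- The `t`-linear extension of the deformed bracket `[·,·,·] + t θ` on `h[t]/(t²)`. -/
def defBrH (M : MatchedPair k g h) (c : Cochain2 k g h g h) :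
    h × h → h × h → h × h → h × h := fun A B C =>
  (M.Lh.br A.1 B.1 C.1,
   c.θ A.1 B.1 C.1 + M.Lh.br A.2 B.1 C.1 + M.Lh.br A.1 B.2 C.1 + M.Lh.br A.1 B.1 C.2)

/-- The `t`-linear extension of the deformed action `ρ + t ν`. -/
def defRho (M : MatchedPair k g h) (c : Cochain2 k g h g h) :
    g × g → g × g → h × h → h × h := fun X Y A =>
  (M.ρ.ρ X.1 Y.1 A.1,
   c.ν X.1 Y.1 A.1 + M.ρ.ρ X.2 Y.1 A.1 + M.ρ.ρ X.1 Y.2 A.1 + M.ρ.ρ X.1 Y.1 A.2)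

/-- The `t`-linear extension of the deformed action `ψ + t φ`. -/
def defPsi (M : MatchedPair k g h) (c : Cochain2 k g h g h) :
    h × h → h × h → g × g → g × g := fun A B X =>
  (M.ψ.ρ A.1 B.1 X.1,
   c.φ A.1 B.1 X.1 + M.ψ.ρ A.2 B.1 X.1 + M.ψ.ρ A.1 B.2 X.1 + M.ψ.ρ A.1 B.1 X.2)

/-- `(ω, θ, ν, φ)` is an infinitesimal deformation of the matched pair `M`: the
`t`-linear extensions of the deformed structure maps make
`(g[t]/(t²), h[t]/(t²))` into a matched pair of 3-Lie algebras over `k[t]/(t²)`. -/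
def IsInfDeformation (M : MatchedPair k g h) (c : Cochain2 k g h g h) : Prop :=
  ∃ Mt : MatchedPair (DualNumber k) (g × g) (h × h),
    (∀ X Y Z, Mt.Lg.br X Y Z = defBrG M c X Y Z) ∧
    (∀ A B C, Mt.Lh.br A B C = defBrH M c A B C) ∧
    (∀ X Y A, Mt.ρ.ρ X Y A = defRho M c X Y A) ∧
    (∀ A B X, Mt.ψ.ρ A B X = defPsi M c A B X)

/-- The map `id + t f` on `g[t]/(t²)`. -/
def tMap (f : g →ₗ[k] g) : g × g → g × g := fun p => (p.1, p.2 + f p.1)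

/-- The pair `(id_g + t f, id_h + t g')` is a morphism of matched pairs over
`k[t]/(t²)` from the deformation `c` to the deformation `c'`. -/
def IsDeformMorphism (M : MatchedPair k g h) (c c' : Cochain2 k g h g h)
    (f : g →ₗ[k] g) (g' : h →ₗ[k] h) : Prop :=
  (∀ X Y Z, tMap f (defBrG M c X Y Z) = defBrG M c' (tMap f X) (tMap f Y) (tMap f Z)) ∧
  (∀ A B C, tMap g' (defBrH M c A B C) = defBrH M c' (tMap g' A) (tMap g' B) (tMap g' C)) ∧
  (∀ X Y A, tMap g' (defRho M c X Y A) = defRho M c' (tMap f X) (tMap f Y) (tMap g' A)) ∧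
  (∀ A B X, tMap f (defPsi M c A B X) = defPsi M c' (tMap g' A) (tMap g' B) (tMap f X))

/-- Equivalence of infinitesimal deformations. -/
def DeformEquiv (M : MatchedPair k g h) (c c' : Cochain2 k g h g h) : Prop :=
  ∃ (f : g →ₗ[k] g) (g' : h →ₗ[k] h), IsDeformMorphism M c c' f g'

end DeformSec

section ExtSec

variable (k : Type*) (g h V W ghat hhat : Type*) [CommRing k]
  [AddCommGroup g] [Module k g] [AddCommGroup h] [Module k h]
  [AddCommGroup V] [Module k V] [AddCommGroup W] [Module k W]
  [AddCommGroup ghat] [Module k ghat] [AddCommGroup hhat] [Module k hhat]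

/-- An abelian extension `0 → V ⋈ W → ĝ ⋈ ĥ → g ⋈ h → 0` of a matched pair of
3-Lie algebras `M` by the pair of modules `(V, W)` (with trivial structure). -/
structure AbelianExt (M : MatchedPair k g h) where
  Mhat : MatchedPair k ghat hhat
  i1 : V →ₗ[k] ghat
  i2 : W →ₗ[k] hhat
  j1 : ghat →ₗ[k] g
  j2 : hhat →ₗ[k] h
  i1_br : ∀ v1 v2 v3, Mhat.Lg.br (i1 v1) (i1 v2) (i1 v3) = 0
  i2_br : ∀ w1 w2 w3, Mhat.Lh.br (i2 w1) (i2 w2) (i2 w3) = 0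
  i_rho : ∀ v1 v2 w, Mhat.ρ.ρ (i1 v1) (i1 v2) (i2 w) = 0
  i_psi : ∀ w1 w2 v, Mhat.ψ.ρ (i2 w1) (i2 w2) (i1 v) = 0
  j1_br : ∀ X Y Z, j1 (Mhat.Lg.br X Y Z) = M.Lg.br (j1 X) (j1 Y) (j1 Z)
  j2_br : ∀ A B C, j2 (Mhat.Lh.br A B C) = M.Lh.br (j2 A) (j2 B) (j2 C)
  j_rho : ∀ X Y A, j2 (Mhat.ρ.ρ X Y A) = M.ρ.ρ (j1 X) (j1 Y) (j2 A)
  j_psi : ∀ A B X, j1 (Mhat.ψ.ρ A B X) = M.ψ.ρ (j2 A) (j2 B) (j1 X)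
  i1_inj : Function.Injective i1
  i2_inj : Function.Injective i2
  j1_surj : Function.Surjective j1
  j2_surj : Function.Surjective j2
  exact1 : ∀ X, j1 X = 0 ↔ ∃ v, i1 v = X
  exact2 : ∀ A, j2 A = 0 ↔ ∃ w, i2 w = A

variable {k g h V W ghat hhat}
variable {M : MatchedPair k g h}

/-- `(s1, s2)` is a section of `(j1, j2)`. -/
def IsSection (E : AbelianExt k g h V W ghat hhat M)
    (s1 : g →ₗ[k] ghat) (s2 : h →ₗ[k] hhat) : Prop :=
  (∀ x, E.j1 (s1 x) = x) ∧ (∀ a, E.j2 (s2 a) = a)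

/-- The representation data `R` on `(V, W)` is the one induced on the abelian
extension `E` (via any section, transported along the injections `i1, i2`). -/
def IsInducedRep (E : AbelianExt k g h V W ghat hhat M)
    (R : MPRepData k g h V W) : Prop :=
  ∀ s1 s2, IsSection E s1 s2 →
    (∀ x1 x2 v, E.i1 (R.ρV x1 x2 v) = E.Mhat.Lg.br (s1 x1) (s1 x2) (E.i1 v)) ∧
    (∀ x1 x2 w, E.i2 (R.ρW x1 x2 w) = E.Mhat.ρ.ρ (s1 x1) (s1 x2) (E.i2 w)) ∧
    (∀ a1 a2 v, E.i1 (R.ψV a1 a2 v) = E.Mhat.ψ.ρ (s2 a1) (s2 a2) (E.i1 v)) ∧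
    (∀ a1 a2 w, E.i2 (R.ψW a1 a2 w) = E.Mhat.Lh.br (s2 a1) (s2 a2) (E.i2 w)) ∧
    (∀ v x a, E.i2 (R.A v x a) = E.Mhat.ρ.ρ (E.i1 v) (s1 x) (s2 a)) ∧
    (∀ w a x, E.i1 (R.B w a x) = E.Mhat.ψ.ρ (E.i2 w) (s2 a) (s1 x))

/-- `c` is the 2-cocycle associated to the abelian extension `E` and the
section `(s1, s2)`. -/
def IsExtCocycle (E : AbelianExt k g h V W ghat hhat M)
    (s1 : g →ₗ[k] ghat) (s2 : h →ₗ[k] hhat) (c : Cochain2 k g h V W) : Prop :=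
  (∀ x1 x2 x3, E.i1 (c.ω x1 x2 x3) =
    E.Mhat.Lg.br (s1 x1) (s1 x2) (s1 x3) - s1 (M.Lg.br x1 x2 x3)) ∧
  (∀ a1 a2 a3, E.i2 (c.θ a1 a2 a3) =
    E.Mhat.Lh.br (s2 a1) (s2 a2) (s2 a3) - s2 (M.Lh.br a1 a2 a3)) ∧
  (∀ x1 x2 a, E.i2 (c.ν x1 x2 a) =
    E.Mhat.ρ.ρ (s1 x1) (s1 x2) (s2 a) - s2 (M.ρ.ρ x1 x2 a)) ∧
  (∀ a1 a2 x, E.i1 (c.φ a1 a2 x) =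
    E.Mhat.ψ.ρ (s2 a1) (s2 a2) (s1 x) - s1 (M.ψ.ρ a1 a2 x))

end ExtSec

section ExtIsoSec

variable {k g h V W ghat hhat ghat' hhat' : Type*} [CommRing k]
  [AddCommGroup g] [Module k g] [AddCommGroup h] [Module k h]
  [AddCommGroup V] [Module k V] [AddCommGroup W] [Module k W]
  [AddCommGroup ghat] [Module k ghat] [AddCommGroup hhat] [Module k hhat]
  [AddCommGroup ghat'] [Module k ghat'] [AddCommGroup hhat'] [Module k hhat']
  {M : MatchedPair k g h}

/-- `(f, gm)` is an isomorphism of abelian extensions from `E` to `E'`. -/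
def IsExtIso (E : AbelianExt k g h V W ghat hhat M)
    (E' : AbelianExt k g h V W ghat' hhat' M)
    (f : ghat →ₗ[k] ghat') (gm : hhat →ₗ[k] hhat') : Prop :=
  Function.Bijective f ∧ Function.Bijective gm ∧
  (∀ X Y Z, f (E.Mhat.Lg.br X Y Z) = E'.Mhat.Lg.br (f X) (f Y) (f Z)) ∧
  (∀ A B C, gm (E.Mhat.Lh.br A B C) = E'.Mhat.Lh.br (gm A) (gm B) (gm C)) ∧
  (∀ X Y A, gm (E.Mhat.ρ.ρ X Y A) = E'.Mhat.ρ.ρ (f X) (f Y) (gm A)) ∧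
  (∀ A B X, f (E.Mhat.ψ.ρ A B X) = E'.Mhat.ψ.ρ (gm A) (gm B) (f X)) ∧
  (∀ v, f (E.i1 v) = E'.i1 v) ∧ (∀ w, gm (E.i2 w) = E'.i2 w) ∧
  (∀ X, E'.j1 (f X) = E.j1 X) ∧ (∀ A, E'.j2 (gm A) = E.j2 A)

end ExtIsoSec

section AutSec

variable {k g h V W ghat hhat : Type*} [CommRing k]
  [AddCommGroup g] [Module k g] [AddCommGroup h] [Module k h]
  [AddCommGroup V] [Module k V] [AddCommGroup W] [Module k W]
  [AddCommGroup ghat] [Module k ghat] [AddCommGroup hhat] [Module k hhat]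

/-- `(f, gm)` is an automorphism of the matched pair `M` (as a pair of linear
equivalences preserving the brackets and actions). -/
def IsMPAut (M : MatchedPair k g h) (f : g ≃ₗ[k] g) (gm : h ≃ₗ[k] h) : Prop :=
  (∀ x y z, f (M.Lg.br x y z) = M.Lg.br (f x) (f y) (f z)) ∧
  (∀ a b c, gm (M.Lh.br a b c) = M.Lh.br (gm a) (gm b) (gm c)) ∧
  (∀ x y a, gm (M.ρ.ρ x y a) = M.ρ.ρ (f x) (f y) (gm a)) ∧
  (∀ a b x, f (M.ψ.ρ a b x) = M.ψ.ρ (gm a) (gm b) (f x))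

/-- A pair of (not necessarily invertible a priori) linear maps is an
automorphism of the matched pair `M`. -/
def IsMPAutMap (M : MatchedPair k g h) (f : g →ₗ[k] g) (gm : h →ₗ[k] h) : Prop :=
  Function.Bijective f ∧ Function.Bijective gm ∧
  (∀ x y z, f (M.Lg.br x y z) = M.Lg.br (f x) (f y) (f z)) ∧
  (∀ a b c, gm (M.Lh.br a b c) = M.Lh.br (gm a) (gm b) (gm c)) ∧
  (∀ x y a, gm (M.ρ.ρ x y a) = M.ρ.ρ (f x) (f y) (gm a)) ∧
  (∀ a b x, f (M.ψ.ρ a b x) = M.ψ.ρ (gm a) (gm b) (f x))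

variable {M : MatchedPair k g h}

/-- The pair `(α, β) = ((α1, α2), (β1, β2))` is inducible: it is the image under
`Φ` of an automorphism `(γ1, γ2)` of the extension preserving `(V, W)`. -/
def Inducible (E : AbelianExt k g h V W ghat hhat M)
    (s1 : g →ₗ[k] ghat) (s2 : h →ₗ[k] hhat)
    (α1 : g ≃ₗ[k] g) (α2 : h ≃ₗ[k] h) (β1 : V ≃ₗ[k] V) (β2 : W ≃ₗ[k] W) : Prop :=
  ∃ (γ1 : ghat ≃ₗ[k] ghat) (γ2 : hhat ≃ₗ[k] hhat),
    IsMPAut E.Mhat γ1 γ2 ∧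
    (∀ v, γ1 (E.i1 v) = E.i1 (β1 v)) ∧ (∀ w, γ2 (E.i2 w) = E.i2 (β2 w)) ∧
    (∀ x, E.j1 (γ1 (s1 x)) = α1 x) ∧ (∀ a, E.j2 (γ2 (s2 a)) = α2 a)

/-- The conditions (Iam1)–(Iam4) of Theorem 5.2 of arXiv:2508.14044 on the pair
of linear maps `(ζ, η)`. -/
def IamCond (M : MatchedPair k g h) (R : MPRepData k g h V W)
    (c : Cochain2 k g h V W)
    (α1 : g ≃ₗ[k] g) (α2 : h ≃ₗ[k] h) (β1 : V ≃ₗ[k] V) (β2 : W ≃ₗ[k] W)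
    (ζ : g →ₗ[k] V) (η : h →ₗ[k] W) : Prop :=
  (∀ x1 x2 x3, β1 (c.ω x1 x2 x3) - c.ω (α1 x1) (α1 x2) (α1 x3) =
      R.ρV (α1 x2) (α1 x3) (ζ x1) + R.ρV (α1 x3) (α1 x1) (ζ x2)
      + R.ρV (α1 x1) (α1 x2) (ζ x3) - ζ (M.Lg.br x1 x2 x3)) ∧
  (∀ a1 a2 a3, β2 (c.θ a1 a2 a3) - c.θ (α2 a1) (α2 a2) (α2 a3) =
      R.ψW (α2 a2) (α2 a3) (η a1) + R.ψW (α2 a3) (α2 a1) (η a2)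
      + R.ψW (α2 a1) (α2 a2) (η a3) - η (M.Lh.br a1 a2 a3)) ∧
  (∀ x1 x2 a, β2 (c.ν x1 x2 a) - c.ν (α1 x1) (α1 x2) (α2 a) =
      R.ρW (α1 x1) (α1 x2) (η a) - η (M.ρ.ρ x1 x2 a)
      + R.A (ζ x1) (α1 x2) (α2 a) - R.A (ζ x2) (α1 x1) (α2 a)) ∧
  (∀ a1 a2 x, β1 (c.φ a1 a2 x) - c.φ (α2 a1) (α2 a2) (α1 x) =
      R.ψV (α2 a1) (α2 a2) (ζ x) - ζ (M.ψ.ρ a1 a2 x)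
      + R.B (η a1) (α2 a2) (α1 x) - R.B (η a2) (α2 a1) (α1 x))

/-- The subgroup `C` of compatible pairs of automorphisms. -/
def InC (M : MatchedPair k g h) (R : MPRepData k g h V W) (c : Cochain2 k g h V W)
    (α1 : g ≃ₗ[k] g) (α2 : h ≃ₗ[k] h) (β1 : V ≃ₗ[k] V) (β2 : W ≃ₗ[k] W) : Prop :=
  ∃ (ζ : g →ₗ[k] V) (η : h →ₗ[k] W), IamCond M R c α1 α2 β1 β2 ζ η

/-- `c'` is the transform `(ω, θ, ν, φ)_{(α,β)}` of the 2-cochain `c` under the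
pair of automorphisms `(α, β)`. -/
def IsTransformed (c : Cochain2 k g h V W)
    (α1 : g ≃ₗ[k] g) (α2 : h ≃ₗ[k] h) (β1 : V ≃ₗ[k] V) (β2 : W ≃ₗ[k] W)
    (c' : Cochain2 k g h V W) : Prop :=
  (∀ x1 x2 x3, c'.ω x1 x2 x3 = β1 (c.ω (α1.symm x1) (α1.symm x2) (α1.symm x3))) ∧
  (∀ a1 a2 a3, c'.θ a1 a2 a3 = β2 (c.θ (α2.symm a1) (α2.symm a2) (α2.symm a3))) ∧
  (∀ x1 x2 a, c'.ν x1 x2 a = β2 (c.ν (α1.symm x1) (α1.symm x2) (α2.symm a))) ∧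
  (∀ a1 a2 x, c'.φ a1 a2 x = β1 (c.φ (α2.symm a1) (α2.symm a2) (α1.symm x)))

end AutSec

/-- The class of a 2-cocycle in the second cohomology group. -/
def H2MPL.mk {k g h V W : Type*} [CommRing k]
    [AddCommGroup g] [Module k g] [AddCommGroup h] [Module k h]
    [AddCommGroup V] [Module k V] [AddCommGroup W] [Module k W]
    (M : MatchedPair k g h) (R : MPRepData k g h V W)
    (c : {c : Cochain2 k g h V W // IsCocycle2 M R c}) : H2MPL M R :=
  Quot.mk _ c

section AuxLemmas
variable {k : Type*} [CommRing k] {g V : Type*} [AddCommGroup g] [Module k g]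
  [AddCommGroup V] [Module k V]

theorem three_swap12 (L : ThreeLie k g) (x y z : g) : L.br x y z = - L.br y x z := by
  have h := L.alt₁ (x + y) z
  simp only [map_add, LinearMap.add_apply, L.alt₁, zero_add, add_zero] at h
  linear_combination (norm := abel1) h

theorem three_swap23 (L : ThreeLie k g) (x y z : g) : L.br x y z = - L.br x z y := by
  have h := L.alt₂ x (y + z)
  simp only [map_add, LinearMap.add_apply, L.alt₂, zero_add, add_zero] at h
  linear_combination (norm := abel1) h

theorem Rep3.skew' {L : ThreeLie k g} (P : Rep3 k g V L) (x y : g) (v : V) :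
    P.ρ x y v = - P.ρ y x v := by
  have h := LinearMap.congr_fun (P.skew (x + y)) v
  simp only [map_add, LinearMap.add_apply, P.skew, LinearMap.zero_apply, zero_add, add_zero] at h
  linear_combination (norm := abel1) h

theorem lin3 {M N : Type*} [AddCommGroup M] [AddCommGroup N] [Module k M] [Module k N]
    (f : M →ₗ[k] N) {u v w t : M} (h : u = v + w + t) : f u = f v + f w + f t := by
  rw [h]; simp only [map_add]

theorem lin3m {M N : Type*} [AddCommGroup M] [AddCommGroup N] [Module k M] [Module k N]
    (f : M →ₗ[k] N) {u v w t : M} (h : u = v - w + t) : f u = f v - f w + f t := by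
  rw [h]; simp only [map_add, map_sub]

end AuxLemmas

set_option maxHeartbeats 4000000 in
set_option linter.unusedTactic false in
private theorem d1_aux1
    {k : Type*} [Field k] {g h V W : Type*}
    [AddCommGroup g] [Module k g] [AddCommGroup h] [Module k h]
    [AddCommGroup V] [Module k V] [AddCommGroup W] [Module k W]
    (M : MatchedPair k g h) (R : MPRep (V := V) (W := W) M)
    (N1 : g →ₗ[k] V) (N2 : h →ₗ[k] W) (c : Cochain2 k g h V W)
    (hd : IsD1 M R.toData N1 N2 c) :
    (∀ x1 x2 x3 x4 x5 : g, R.toData.ρV x4 x5 (c.ω x1 x2 x3) + R.toData.ρV x5 x3 (c.ω x1 x2 x4) + R.toData.ρV x3 x4 (c.ω x1 x2 x5) + c.ω (M.Lg.br x1 x2 x3) x4 x5 + c.ω x3 (M.Lg.br x1 x2 x4) x5 + c.ω x3 x4 (M.Lg.br x1 x2 x5) - R.toData.ρV x1 x2 (c.ω x3 x4 x5) - c.ω x1 x2 (M.Lg.br x3 x4 x5) = 0) := by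
  obtain ⟨hω, hν, hφ, hθ⟩ := hd
  intro x1 x2 x3 x4 x5
  simp only [MPRep.toData, hω, hν, hφ, hθ, map_add, map_sub, LinearMap.add_apply, LinearMap.sub_apply]
  have hsw0 : (R.rV.ρ x4 x5 (R.rV.ρ x3 x1 (N1 x2))) = -(R.rV.ρ x4 x5 (R.rV.ρ x1 x3 (N1 x2))) := by (try rw [Rep3.skew' R.rV x3 x1 (N1 x2)]); (try simp only [map_neg, LinearMap.neg_apply, neg_neg])
  have hsw1 : (R.rV.ρ x5 x3 (R.rV.ρ x2 x4 (N1 x1))) = -(R.rV.ρ x3 x5 (R.rV.ρ x2 x4 (N1 x1))) := by (try rw [Rep3.skew' R.rV x5 x3 (R.rV.ρ x2 x4 (N1 x1))]); (try simp only [map_neg, LinearMap.neg_apply, neg_neg])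
  have hsw2 : (R.rV.ρ x5 x3 (R.rV.ρ x4 x1 (N1 x2))) = (R.rV.ρ x3 x5 (R.rV.ρ x1 x4 (N1 x2))) := by (try rw [Rep3.skew' R.rV x4 x1 (N1 x2)]); (try simp only [map_neg, LinearMap.neg_apply, neg_neg]); (try rw [Rep3.skew' R.rV x5 x3 (R.rV.ρ x1 x4 (N1 x2))]); (try simp only [map_neg, LinearMap.neg_apply, neg_neg])
  have hsw3 : (R.rV.ρ x5 x3 (R.rV.ρ x1 x2 (N1 x4))) = -(R.rV.ρ x3 x5 (R.rV.ρ x1 x2 (N1 x4))) := by (try rw [Rep3.skew' R.rV x5 x3 (R.rV.ρ x1 x2 (N1 x4))]); (try simp only [map_neg, LinearMap.neg_apply, neg_neg])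
  have hsw4 : (R.rV.ρ x3 x4 (R.rV.ρ x5 x1 (N1 x2))) = -(R.rV.ρ x3 x4 (R.rV.ρ x1 x5 (N1 x2))) := by (try rw [Rep3.skew' R.rV x5 x1 (N1 x2)]); (try simp only [map_neg, LinearMap.neg_apply, neg_neg])
  have hsw5 : (R.rV.ρ x5 (M.Lg.br x1 x2 x3) (N1 x4)) = -(R.rV.ρ (M.Lg.br x1 x2 x3) x5 (N1 x4)) := by (try rw [Rep3.skew' R.rV x5 (M.Lg.br x1 x2 x3) (N1 x4)]); (try simp only [map_neg, LinearMap.neg_apply, neg_neg])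
  have hsw6 : (R.rV.ρ x1 x2 (R.rV.ρ x5 x3 (N1 x4))) = -(R.rV.ρ x1 x2 (R.rV.ρ x3 x5 (N1 x4))) := by (try rw [Rep3.skew' R.rV x5 x3 (N1 x4)]); (try simp only [map_neg, LinearMap.neg_apply, neg_neg])
  have hsw7 : (R.rV.ρ x3 (M.Lg.br x1 x2 x5) (N1 x4)) = -(R.rV.ρ (M.Lg.br x1 x2 x5) x3 (N1 x4)) := by (try rw [Rep3.skew' R.rV x3 (M.Lg.br x1 x2 x5) (N1 x4)]); (try simp only [map_neg, LinearMap.neg_apply, neg_neg])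
  have hsw8 : (R.rV.ρ x4 (M.Lg.br x1 x3 x5) (N1 x2)) = -(R.rV.ρ (M.Lg.br x1 x3 x5) x4 (N1 x2)) := by (try rw [Rep3.skew' R.rV x4 (M.Lg.br x1 x3 x5) (N1 x2)]); (try simp only [map_neg, LinearMap.neg_apply, neg_neg])
  have hsw9 : (R.rV.ρ x1 x3 (R.rV.ρ x5 x4 (N1 x2))) = -(R.rV.ρ x1 x3 (R.rV.ρ x4 x5 (N1 x2))) := by (try rw [Rep3.skew' R.rV x5 x4 (N1 x2)]); (try simp only [map_neg, LinearMap.neg_apply, neg_neg])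
  have hsw10 : (R.rV.ρ x5 x1 (R.rV.ρ x3 x4 (N1 x2))) = -(R.rV.ρ x1 x5 (R.rV.ρ x3 x4 (N1 x2))) := by (try rw [Rep3.skew' R.rV x5 x1 (R.rV.ρ x3 x4 (N1 x2))]); (try simp only [map_neg, LinearMap.neg_apply, neg_neg])
  have hsw11 : (R.rV.ρ x4 (M.Lg.br x2 x3 x5) (N1 x1)) = -(R.rV.ρ (M.Lg.br x2 x3 x5) x4 (N1 x1)) := by (try rw [Rep3.skew' R.rV x4 (M.Lg.br x2 x3 x5) (N1 x1)]); (try simp only [map_neg, LinearMap.neg_apply, neg_neg])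
  have hsw12 : (R.rV.ρ x2 x3 (R.rV.ρ x5 x4 (N1 x1))) = -(R.rV.ρ x2 x3 (R.rV.ρ x4 x5 (N1 x1))) := by (try rw [Rep3.skew' R.rV x5 x4 (N1 x1)]); (try simp only [map_neg, LinearMap.neg_apply, neg_neg])
  have hsw13 : (R.rV.ρ x5 x2 (R.rV.ρ x3 x4 (N1 x1))) = -(R.rV.ρ x2 x5 (R.rV.ρ x3 x4 (N1 x1))) := by (try rw [Rep3.skew' R.rV x5 x2 (R.rV.ρ x3 x4 (N1 x1))]); (try simp only [map_neg, LinearMap.neg_apply, neg_neg])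
  have hsw14 : (R.rV.ρ (M.Lg.br x3 x4 x1) x5 (N1 x2)) = (R.rV.ρ (M.Lg.br x1 x3 x4) x5 (N1 x2)) := by (try rw [three_swap23 M.Lg x3 x4 x1]); (try simp only [map_neg, LinearMap.neg_apply, neg_neg]); (try rw [three_swap12 M.Lg x3 x1 x4]); (try simp only [map_neg, LinearMap.neg_apply, neg_neg])
  have hsw15 : (R.rV.ρ x1 (M.Lg.br x3 x4 x5) (N1 x2)) = -(R.rV.ρ (M.Lg.br x3 x4 x5) x1 (N1 x2)) := by (try rw [Rep3.skew' R.rV x1 (M.Lg.br x3 x4 x5) (N1 x2)]); (try simp only [map_neg, LinearMap.neg_apply, neg_neg])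
  have hsw16 : (R.rV.ρ (M.Lg.br x3 x4 x2) x5 (N1 x1)) = (R.rV.ρ (M.Lg.br x2 x3 x4) x5 (N1 x1)) := by (try rw [three_swap23 M.Lg x3 x4 x2]); (try simp only [map_neg, LinearMap.neg_apply, neg_neg]); (try rw [three_swap12 M.Lg x3 x2 x4]); (try simp only [map_neg, LinearMap.neg_apply, neg_neg])
  linear_combination (norm := module) - (R.rV.rep1 x1 x2 x3 x4 (N1 x5)) + (lin3 N1 (M.Lg.fund x1 x2 x3 x4 x5)) + (R.rV.rep1 x1 x2 x3 x5 (N1 x4)) - (R.rV.rep1 x1 x2 x4 x5 (N1 x3)) + (R.rV.rep1 x1 x3 x4 x5 (N1 x2)) - (R.rV.rep2 x1 x3 x5 x4 (N1 x2)) - (R.rV.rep1 x2 x3 x4 x5 (N1 x1)) + (R.rV.rep2 x2 x3 x5 x4 (N1 x1)) - (R.rV.rep1 x3 x4 x1 x5 (N1 x2)) + (R.rV.rep1 x3 x4 x2 x5 (N1 x1)) + hsw0 + hsw1 + hsw2 + hsw3 + hsw4 + hsw5 - hsw6 + hsw7 + hsw8 - hsw9 - hsw10 - hsw11 + hsw12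 + hsw13 - hsw14 - hsw15 + hsw16

set_option maxHeartbeats 4000000 in
set_option linter.unusedTactic false in
private theorem d1_aux2
    {k : Type*} [Field k] {g h V W : Type*}
    [AddCommGroup g] [Module k g] [AddCommGroup h] [Module k h]
    [AddCommGroup V] [Module k V] [AddCommGroup W] [Module k W]
    (M : MatchedPair k g h) (R : MPRep (V := V) (W := W) M)
    (N1 : g →ₗ[k] V) (N2 : h →ₗ[k] W) (c : Cochain2 k g h V W)
    (hd : IsD1 M R.toData N1 N2 c) :
    (∀ (x1 x2 : g) (a1 a2 a3 : h), R.toData.ψW a2 a3 (c.ν x1 x2 a1) + R.toData.ψW a3 a1 (c.ν x1 x2 a2) + R.toData.ψW a1 a2 (c.ν x1 x2 a3) + c.θ (M.ρ.ρ x1 x2 a1) a2 a3 + c.θ a1 (M.ρ.ρ x1 x2 a2) a3 + c.θ a1 a2 (M.ρ.ρ x1 x2 a3) - R.toData.ρW x1 x2 (c.θ a1 a2 a3) - c.ν x1 x2 (M.Lh.br a1 a2 a3) = 0) := by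
  obtain ⟨hω, hν, hφ, hθ⟩ := hd
  intro x1 x2 a1 a2 a3
  simp only [MPRep.toData, hω, hν, hφ, hθ, map_add, map_sub, LinearMap.add_apply, LinearMap.sub_apply]
  have hg0 := R.iden22 a2 a1 a3 x1 x2 0 0 0 (N2 a3)
  simp only [map_add, map_sub, map_zero, map_neg, LinearMap.add_apply, LinearMap.sub_apply, LinearMap.zero_apply, LinearMap.neg_apply, add_zero, zero_add, sub_zero, zero_sub, sub_self, neg_zero, neg_neg] at hg0
  have hg1 := R.iden20 a1 a3 a2 x1 x2 0 (N1 x2) 0 0 0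
  simp only [map_add, map_sub, map_zero, map_neg, LinearMap.add_apply, LinearMap.sub_apply, LinearMap.zero_apply, LinearMap.neg_apply, add_zero, zero_add, sub_zero, zero_sub, sub_self, neg_zero, neg_neg] at hg1
  have hg2 := R.iden22 a3 a1 a2 x2 x1 (N1 x2) 0 0 0
  simp only [map_add, map_sub, map_zero, map_neg, LinearMap.add_apply, LinearMap.sub_apply, LinearMap.zero_apply, LinearMap.neg_apply, add_zero, zero_add, sub_zero, zero_sub, sub_self, neg_zero, neg_neg] at hg2
  have hg3 := R.iden22 a2 a3 a1 x1 x2 (N1 x1) (N1 x2) (N2 a3) (N2 a1)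
  simp only [map_add, map_sub, map_zero, map_neg, LinearMap.add_apply, LinearMap.sub_apply, LinearMap.zero_apply, LinearMap.neg_apply, add_zero, zero_add, sub_zero, zero_sub, sub_self, neg_zero, neg_neg] at hg3
  have hg4 := R.iden20 a2 a3 a1 x2 x1 (N1 x2) 0 0 0 0
  simp only [map_add, map_sub, map_zero, map_neg, LinearMap.add_apply, LinearMap.sub_apply, LinearMap.zero_apply, LinearMap.neg_apply, add_zero, zero_add, sub_zero, zero_sub, sub_self, neg_zero, neg_neg] at hg4
  have hg5 := R.iden22 a2 a1 a3 x1 x2 0 0 (N2 a1) 0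
  simp only [map_add, map_sub, map_zero, map_neg, LinearMap.add_apply, LinearMap.sub_apply, LinearMap.zero_apply, LinearMap.neg_apply, add_zero, zero_add, sub_zero, zero_sub, sub_self, neg_zero, neg_neg] at hg5
  have hg6 := R.iden22 a2 a3 a1 x1 x2 0 (N1 x2) 0 0
  simp only [map_add, map_sub, map_zero, map_neg, LinearMap.add_apply, LinearMap.sub_apply, LinearMap.zero_apply, LinearMap.neg_apply, add_zero, zero_add, sub_zero, zero_sub, sub_self, neg_zero, neg_neg] at hg6
  have hg7 := R.iden20 a2 a3 a1 x2 x1 0 (N1 x1) 0 0 0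
  simp only [map_add, map_sub, map_zero, map_neg, LinearMap.add_apply, LinearMap.sub_apply, LinearMap.zero_apply, LinearMap.neg_apply, add_zero, zero_add, sub_zero, zero_sub, sub_self, neg_zero, neg_neg] at hg7
  have hg8 := R.iden20 a1 a2 a3 x1 x2 (N1 x1) 0 0 0 0
  simp only [map_add, map_sub, map_zero, map_neg, LinearMap.add_apply, LinearMap.sub_apply, LinearMap.zero_apply, LinearMap.neg_apply, add_zero, zero_add, sub_zero, zero_sub, sub_self, neg_zero, neg_neg] at hg8
  have hsw0 : (R.pW.ρ (M.ρ.ρ x1 x2 a1) a2 (N2 a3)) = -(R.pW.ρ a2 (M.ρ.ρ x1 x2 a1) (N2 a3)) := by (try rw [Rep3.skew' R.pW (M.ρ.ρ x1 x2 a1) a2 (N2 a3)]); (try simp only [map_neg, LinearMap.neg_apply, neg_neg])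
  have hsw1 : (N2 (M.Lh.br (M.ρ.ρ x1 x2 a1) a2 a3)) = (N2 (M.Lh.br a2 a3 (M.ρ.ρ x1 x2 a1))) := by (try rw [three_swap12 M.Lh (M.ρ.ρ x1 x2 a1) a2 a3]); (try simp only [map_neg, LinearMap.neg_apply, neg_neg]); (try rw [three_swap23 M.Lh a2 (M.ρ.ρ x1 x2 a1) a3]); (try simp only [map_neg, LinearMap.neg_apply, neg_neg])
  have hsw2 : (R.pW.ρ (M.ρ.ρ x1 x2 a2) a3 (N2 a1)) = -(R.pW.ρ a3 (M.ρ.ρ x1 x2 a2) (N2 a1)) := by (try rw [Rep3.skew' R.pW (M.ρ.ρ x1 x2 a2) a3 (N2 a1)]); (try simp only [map_neg, LinearMap.neg_apply, neg_neg])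
  have hsw3 : (N2 (M.Lh.br a1 (M.ρ.ρ x1 x2 a2) a3)) = -(N2 (M.Lh.br a1 a3 (M.ρ.ρ x1 x2 a2))) := by (try rw [three_swap23 M.Lh a1 (M.ρ.ρ x1 x2 a2) a3]); (try simp only [map_neg, LinearMap.neg_apply, neg_neg])
  have hsw4 : (R.A (R.pV.ρ a3 a2 (N1 x2)) x1 a1) = -(R.A (R.pV.ρ a2 a3 (N1 x2)) x1 a1) := by (try rw [Rep3.skew' R.pV a3 a2 (N1 x2)]); (try simp only [map_neg, LinearMap.neg_apply, neg_neg])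
  have hsw5 : (R.pW.ρ a3 a1 (R.rW.ρ x2 x1 (N2 a2))) = (R.pW.ρ a1 a3 (R.rW.ρ x1 x2 (N2 a2))) := by (try rw [Rep3.skew' R.rW x2 x1 (N2 a2)]); (try simp only [map_neg, LinearMap.neg_apply, neg_neg]); (try rw [Rep3.skew' R.pW a3 a1 (R.rW.ρ x1 x2 (N2 a2))]); (try simp only [map_neg, LinearMap.neg_apply, neg_neg])
  have hsw6 : (R.rW.ρ (M.ψ.ρ a3 a1 x2) x1 (N2 a2)) = -(R.rW.ρ (M.ψ.ρ a1 a3 x2) x1 (N2 a2)) := by (try rw [Rep3.skew' M.ψ a3 a1 x2]); (try simp only [map_neg, LinearMap.neg_apply, neg_neg])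
  have hsw7 : (R.pW.ρ a3 a2 (R.rW.ρ x2 x1 (N2 a1))) = (R.pW.ρ a2 a3 (R.rW.ρ x1 x2 (N2 a1))) := by (try rw [Rep3.skew' R.rW x2 x1 (N2 a1)]); (try simp only [map_neg, LinearMap.neg_apply, neg_neg]); (try rw [Rep3.skew' R.pW a3 a2 (R.rW.ρ x1 x2 (N2 a1))]); (try simp only [map_neg, LinearMap.neg_apply, neg_neg])
  have hsw8 : (R.rW.ρ x2 x1 (R.pW.ρ a3 a2 (N2 a1))) = (R.rW.ρ x1 x2 (R.pW.ρ a2 a3 (N2 a1))) := by (try rw [Rep3.skew' R.pW a3 a2 (N2 a1)]); (try simp only [map_neg, LinearMap.neg_apply, neg_neg]); (try rw [Rep3.skew' R.rW x2 x1 (R.pW.ρ a2 a3 (N2 a1))]); (try simp only [map_neg, LinearMap.neg_apply, neg_neg])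
  have hsw9 : (R.rW.ρ x2 (M.ψ.ρ a3 a2 x1) (N2 a1)) = (R.rW.ρ (M.ψ.ρ a2 a3 x1) x2 (N2 a1)) := by (try rw [Rep3.skew' M.ψ a3 a2 x1]); (try simp only [map_neg, LinearMap.neg_apply, neg_neg]); (try rw [Rep3.skew' R.rW x2 (M.ψ.ρ a2 a3 x1) (N2 a1)]); (try simp only [map_neg, LinearMap.neg_apply, neg_neg])
  have hsw10 : (R.rW.ρ x1 (M.ψ.ρ a1 a3 x2) (N2 a2)) = -(R.rW.ρ (M.ψ.ρ a1 a3 x2) x1 (N2 a2)) := by (try rw [Rep3.skew' R.rW x1 (M.ψ.ρ a1 a3 x2) (N2 a2)]); (try simp only [map_neg, LinearMap.neg_apply, neg_neg])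
  have hsw11 : (R.pW.ρ (M.ρ.ρ x1 x2 a1) a3 (N2 a2)) = -(R.pW.ρ a3 (M.ρ.ρ x1 x2 a1) (N2 a2)) := by (try rw [Rep3.skew' R.pW (M.ρ.ρ x1 x2 a1) a3 (N2 a2)]); (try simp only [map_neg, LinearMap.neg_apply, neg_neg])
  have hsw12 : (R.A (N1 x2) x1 (M.Lh.br a3 a1 a2)) = (R.A (N1 x2) x1 (M.Lh.br a1 a2 a3)) := by (try rw [three_swap12 M.Lh a3 a1 a2]); (try simp only [map_neg, LinearMap.neg_apply, neg_neg]); (try rw [three_swap23 M.Lh a1 a3 a2]); (try simp only [map_neg, LinearMap.neg_apply, neg_neg])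
  have hsw13 : (R.A (N1 x1) x2 (M.Lh.br a2 a3 a1)) = (R.A (N1 x1) x2 (M.Lh.br a1 a2 a3)) := by (try rw [three_swap23 M.Lh a2 a3 a1]); (try simp only [map_neg, LinearMap.neg_apply, neg_neg]); (try rw [three_swap12 M.Lh a2 a1 a3]); (try simp only [map_neg, LinearMap.neg_apply, neg_neg])
  have hsw14 : (R.A (N1 x1) (M.ψ.ρ a3 a1 x2) a2) = -(R.A (N1 x1) (M.ψ.ρ a1 a3 x2) a2) := by (try rw [Rep3.skew' M.ψ a3 a1 x2]); (try simp only [map_neg, LinearMap.neg_apply, neg_neg])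
  have hsw15 : (R.rW.ρ (M.ψ.ρ a3 a1 x1) x2 (N2 a2)) = -(R.rW.ρ (M.ψ.ρ a1 a3 x1) x2 (N2 a2)) := by (try rw [Rep3.skew' M.ψ a3 a1 x1]); (try simp only [map_neg, LinearMap.neg_apply, neg_neg])
  have hsw16 : (N2 (M.Lh.br a2 a3 (M.ρ.ρ x2 x1 a1))) = -(N2 (M.Lh.br a2 a3 (M.ρ.ρ x1 x2 a1))) := by (try rw [Rep3.skew' M.ρ x2 x1 a1]); (try simp only [map_neg, LinearMap.neg_apply, neg_neg])
  have hsw17 : (R.A (N1 x2) (M.ψ.ρ a2 a1 x1) a3) = -(R.A (N1 x2) (M.ψ.ρ a1 a2 x1) a3) := by (try rw [Rep3.skew' M.ψ a2 a1 x1]); (try simp only [map_neg, LinearMap.neg_apply, neg_neg])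
  have hsw18 : (R.pW.ρ a2 (M.ρ.ρ x2 x1 a3) (N2 a1)) = -(R.pW.ρ a2 (M.ρ.ρ x1 x2 a3) (N2 a1)) := by (try rw [Rep3.skew' M.ρ x2 x1 a3]); (try simp only [map_neg, LinearMap.neg_apply, neg_neg])
  have hsw19 : (N2 (M.Lh.br (M.ρ.ρ x1 x2 a3) a2 a1)) = -(N2 (M.Lh.br a1 a2 (M.ρ.ρ x1 x2 a3))) := by (try rw [three_swap12 M.Lh (M.ρ.ρ x1 x2 a3) a2 a1]); (try simp only [map_neg, LinearMap.neg_apply, neg_neg]); (try rw [three_swap23 M.Lh a2 (M.ρ.ρ x1 x2 a3) a1]); (try simp only [map_neg, LinearMap.neg_apply, neg_neg]); (try rw [three_swap12 M.Lh a2 a1 (M.ρ.ρ x1 x2 a3)]); (try simp only [map_neg, LinearMap.neg_apply, neg_neg])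
  have hsw20 : (N2 (M.ρ.ρ x1 x2 (M.Lh.br a3 a2 a1))) = -(N2 (M.ρ.ρ x1 x2 (M.Lh.br a1 a2 a3))) := by (try rw [three_swap12 M.Lh a3 a2 a1]); (try simp only [map_neg, LinearMap.neg_apply, neg_neg]); (try rw [three_swap23 M.Lh a2 a3 a1]); (try simp only [map_neg, LinearMap.neg_apply, neg_neg]); (try rw [three_swap12 M.Lh a2 a1 a3]); (try simp only [map_neg, LinearMap.neg_apply, neg_neg])
  have hsw21 : (N2 (M.ρ.ρ x1 (M.ψ.ρ a2 a1 x2) a3)) = (N2 (M.ρ.ρ (M.ψ.ρ a1 a2 x2) x1 a3)) := by (try rw [Rep3.skew' M.ψ a2 a1 x2]); (try simp only [map_neg, LinearMap.neg_apply, neg_neg]); (try rw [Rep3.skew' M.ρ x1 (M.ψ.ρ a1 a2 x2) a3]); (try simp only [map_neg, LinearMap.neg_apply, neg_neg])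
  have hsw22 : (N2 (M.ρ.ρ (M.ψ.ρ a3 a2 x2) x1 a1)) = -(N2 (M.ρ.ρ (M.ψ.ρ a2 a3 x2) x1 a1)) := by (try rw [Rep3.skew' M.ψ a3 a2 x2]); (try simp only [map_neg, LinearMap.neg_apply, neg_neg])
  have hsw23 : (N2 (M.Lh.br a3 a1 (M.ρ.ρ x1 x2 a2))) = -(N2 (M.Lh.br a1 a3 (M.ρ.ρ x1 x2 a2))) := by (try rw [three_swap12 M.Lh a3 a1 (M.ρ.ρ x1 x2 a2)]); (try simp only [map_neg, LinearMap.neg_apply, neg_neg])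
  have hsw24 : (R.pW.ρ a3 a1 (R.A (N1 x2) x1 a2)) = -(R.pW.ρ a1 a3 (R.A (N1 x2) x1 a2)) := by (try rw [Rep3.skew' R.pW a3 a1 (R.A (N1 x2) x1 a2)]); (try simp only [map_neg, LinearMap.neg_apply, neg_neg])
  have hsw25 : (R.A (N1 x2) (M.ψ.ρ a3 a1 x1) a2) = -(R.A (N1 x2) (M.ψ.ρ a1 a3 x1) a2) := by (try rw [Rep3.skew' M.ψ a3 a1 x1]); (try simp only [map_neg, LinearMap.neg_apply, neg_neg])
  have hsw26 : (R.A (R.pV.ρ a2 a1 (N1 x1)) x2 a3) = -(R.A (R.pV.ρ a1 a2 (N1 x1)) x2 a3) := by (try rw [Rep3.skew' R.pV a2 a1 (N1 x1)]); (try simp only [map_neg, LinearMap.neg_apply, neg_neg])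
  have hsw27 : (R.rW.ρ x2 x1 (R.pW.ρ a2 a1 (N2 a3))) = (R.rW.ρ x1 x2 (R.pW.ρ a1 a2 (N2 a3))) := by (try rw [Rep3.skew' R.pW a2 a1 (N2 a3)]); (try simp only [map_neg, LinearMap.neg_apply, neg_neg]); (try rw [Rep3.skew' R.rW x2 x1 (R.pW.ρ a1 a2 (N2 a3))]); (try simp only [map_neg, LinearMap.neg_apply, neg_neg])
  have hsw28 : (R.pW.ρ (M.ρ.ρ x2 x1 a2) a1 (N2 a3)) = (R.pW.ρ a1 (M.ρ.ρ x1 x2 a2) (N2 a3)) := by (try rw [Rep3.skew' M.ρ x2 x1 a2]); (try simp only [map_neg, LinearMap.neg_apply, neg_neg]); (try rw [Rep3.skew' R.pW (M.ρ.ρ x1 x2 a2) a1 (N2 a3)]); (try simp only [map_neg, LinearMap.neg_apply, neg_neg])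
  have hsw29 : (R.pW.ρ a2 (M.ρ.ρ x2 x1 a1) (N2 a3)) = -(R.pW.ρ a2 (M.ρ.ρ x1 x2 a1) (N2 a3)) := by (try rw [Rep3.skew' M.ρ x2 x1 a1]); (try simp only [map_neg, LinearMap.neg_apply, neg_neg])
  have hsw30 : (R.pW.ρ a2 a1 (R.rW.ρ x2 x1 (N2 a3))) = (R.pW.ρ a1 a2 (R.rW.ρ x1 x2 (N2 a3))) := by (try rw [Rep3.skew' R.rW x2 x1 (N2 a3)]); (try simp only [map_neg, LinearMap.neg_apply, neg_neg]); (try rw [Rep3.skew' R.pW a2 a1 (R.rW.ρ x1 x2 (N2 a3))]); (try simp only [map_neg, LinearMap.neg_apply, neg_neg])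
  linear_combination (norm := module) hg0 - hg1 - (R.iden19 a3 a1 x2 x1 (N2 a2)) + (R.iden21 a3 a2 x2 x1 (N2 a1)) + (R.iden21 a1 a3 x1 x2 (N2 a2)) - (R.iden23 x1 x2 a1 a3 (N2 a2)) - hg2 - (R.iden17 a3 a2 x1 x2 (N2 a1)) + hg3 + (R.iden19 a3 a1 x1 x2 (N2 a2)) - (lin3m N2 (M.mp5 a2 a3 a1 x2 x1)) - hg4 - (R.iden17 a2 a3 x2 x1 (N2 a1)) + (lin3 N2 (M.mp6 x1 x2 a3 a2 a1)) + hg5 + (lin3m N2 (M.mp5 a3 a1 a2 x1 x2)) - hg6 - hg7 + (R.iden23 x1 x2 a3 a1 (N2 a2)) + hg8 - (R.iden13 x2 x1 a2 a1 (N2 a3)) + hsw0 - hsw1 + hsw2 - hsw3 - hsw4 + hsw5 - hsw6 - hsw7 + hsw8 + hsw9 + hsw10 + hsw11 - hsw12 + hsw13 + hsw14 + hsw15 - hsw16 - hsw17 + hsw18 - hsw19 + hsw20 + hsw21 + hsw22 + hsw23 - hsw24 + hsw25 + hsw26 + hsw27 - hsw28 - hsw29 - hsw30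

set_option maxHeartbeats 4000000 in
set_option linter.unusedTactic false in
private theorem d1_aux3
    {k : Type*} [Field k] {g h V W : Type*}
    [AddCommGroup g] [Module k g] [AddCommGroup h] [Module k h]
    [AddCommGroup V] [Module k V] [AddCommGroup W] [Module k W]
    (M : MatchedPair k g h) (R : MPRep (V := V) (W := W) M)
    (N1 : g →ₗ[k] V) (N2 : h →ₗ[k] W) (c : Cochain2 k g h V W)
    (hd : IsD1 M R.toData N1 N2 c) :
    (∀ (a1 a2 : h) (x1 x2 x3 : g), R.toData.ρV x2 x3 (c.φ a1 a2 x1) + R.toData.ρV x3 x1 (c.φ a1 a2 x2) + R.toData.ρV x1 x2 (c.φ a1 a2 x3) + c.ω (M.ψ.ρ a1 a2 x1) x2 x3 + c.ω x1 (M.ψ.ρ a1 a2 x2) x3 + c.ω x1 x2 (M.ψ.ρ a1 a2 x3) - R.toData.ψV a1 a2 (c.ω x1 x2 x3) - c.φ a1 a2 (M.Lg.br x1 x2 x3) = 0) := by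
  obtain ⟨hω, hν, hφ, hθ⟩ := hd
  intro a1 a2 x1 x2 x3
  simp only [MPRep.toData, hω, hν, hφ, hθ, map_add, map_sub, LinearMap.add_apply, LinearMap.sub_apply]
  have hg0 := R.iden10 x3 x1 x2 a1 a2 0 0 (N2 a1) 0
  simp only [map_add, map_sub, map_zero, map_neg, LinearMap.add_apply, LinearMap.sub_apply, LinearMap.zero_apply, LinearMap.neg_apply, add_zero, zero_add, sub_zero, zero_sub, sub_self, neg_zero, neg_neg] at hg0
  have hg1 := R.iden8 x1 x3 x2 a2 a1 0 0 0 (N2 a2) 0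
  simp only [map_add, map_sub, map_zero, map_neg, LinearMap.add_apply, LinearMap.sub_apply, LinearMap.zero_apply, LinearMap.neg_apply, add_zero, zero_add, sub_zero, zero_sub, sub_self, neg_zero, neg_neg] at hg1
  have hg2 := R.iden8 x2 x3 x1 a1 a2 0 0 0 (N2 a1) 0
  simp only [map_add, map_sub, map_zero, map_neg, LinearMap.add_apply, LinearMap.sub_apply, LinearMap.zero_apply, LinearMap.neg_apply, add_zero, zero_add, sub_zero, zero_sub, sub_self, neg_zero, neg_neg] at hg2
  have hg3 := R.iden10 x3 x2 x1 a2 a1 0 0 0 (N2 a1)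
  simp only [map_add, map_sub, map_zero, map_neg, LinearMap.add_apply, LinearMap.sub_apply, LinearMap.zero_apply, LinearMap.neg_apply, add_zero, zero_add, sub_zero, zero_sub, sub_self, neg_zero, neg_neg] at hg3
  have hg4 := R.iden10 x2 x1 x3 a2 a1 0 (N1 x3) 0 0
  simp only [map_add, map_sub, map_zero, map_neg, LinearMap.add_apply, LinearMap.sub_apply, LinearMap.zero_apply, LinearMap.neg_apply, add_zero, zero_add, sub_zero, zero_sub, sub_self, neg_zero, neg_neg] at hg4
  have hg5 := R.iden10 x2 x3 x1 a2 a1 0 0 (N2 a2) 0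
  simp only [map_add, map_sub, map_zero, map_neg, LinearMap.add_apply, LinearMap.sub_apply, LinearMap.zero_apply, LinearMap.neg_apply, add_zero, zero_add, sub_zero, zero_sub, sub_self, neg_zero, neg_neg] at hg5
  have hg6 := R.iden10 x1 x2 x3 a1 a2 (N1 x2) (N1 x3) (N2 a1) (N2 a2)
  simp only [map_add, map_sub, map_zero, map_neg, LinearMap.add_apply, LinearMap.sub_apply, LinearMap.zero_apply, LinearMap.neg_apply, add_zero, zero_add, sub_zero, zero_sub, sub_self, neg_zero, neg_neg] at hg6
  have hg7 := R.iden10 x1 x3 x2 a1 a2 (N1 x3) 0 0 0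
  simp only [map_add, map_sub, map_zero, map_neg, LinearMap.add_apply, LinearMap.sub_apply, LinearMap.zero_apply, LinearMap.neg_apply, add_zero, zero_add, sub_zero, zero_sub, sub_self, neg_zero, neg_neg] at hg7
  have hg8 := R.iden8 x3 x1 x2 a1 a2 0 (N1 x1) 0 0 0
  simp only [map_add, map_sub, map_zero, map_neg, LinearMap.add_apply, LinearMap.sub_apply, LinearMap.zero_apply, LinearMap.neg_apply, add_zero, zero_add, sub_zero, zero_sub, sub_self, neg_zero, neg_neg] at hg8
  have hg9 := R.iden8 x2 x1 x3 a2 a1 (N1 x2) 0 0 0 0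
  simp only [map_add, map_sub, map_zero, map_neg, LinearMap.add_apply, LinearMap.sub_apply, LinearMap.zero_apply, LinearMap.neg_apply, add_zero, zero_add, sub_zero, zero_sub, sub_self, neg_zero, neg_neg] at hg9
  have hg10 := R.iden10 x1 x2 x3 a1 a2 0 0 0 (N2 a2)
  simp only [map_add, map_sub, map_zero, map_neg, LinearMap.add_apply, LinearMap.sub_apply, LinearMap.zero_apply, LinearMap.neg_apply, add_zero, zero_add, sub_zero, zero_sub, sub_self, neg_zero, neg_neg] at hg10
  have hg11 := R.iden4 (N2 a2) (N2 a1) a2 a1 x1 x2 x3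
  simp only [map_add, map_sub, map_zero, map_neg, LinearMap.add_apply, LinearMap.sub_apply, LinearMap.zero_apply, LinearMap.neg_apply, add_zero, zero_add, sub_zero, zero_sub, sub_self, neg_zero, neg_neg] at hg11
  have hg12 := R.iden10 x1 x2 x3 a1 a2 0 0 (N2 a1) 0
  simp only [map_add, map_sub, map_zero, map_neg, LinearMap.add_apply, LinearMap.sub_apply, LinearMap.zero_apply, LinearMap.neg_apply, add_zero, zero_add, sub_zero, zero_sub, sub_self, neg_zero, neg_neg] at hg12
  have hg13 := R.iden8 x3 x1 x2 a1 a2 0 0 0 (N2 a1) 0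
  simp only [map_add, map_sub, map_zero, map_neg, LinearMap.add_apply, LinearMap.sub_apply, LinearMap.zero_apply, LinearMap.neg_apply, add_zero, zero_add, sub_zero, zero_sub, sub_self, neg_zero, neg_neg] at hg13
  have hg14 := R.iden10 x1 x3 x2 a2 a1 0 0 0 (N2 a1)
  simp only [map_add, map_sub, map_zero, map_neg, LinearMap.add_apply, LinearMap.sub_apply, LinearMap.zero_apply, LinearMap.neg_apply, add_zero, zero_add, sub_zero, zero_sub, sub_self, neg_zero, neg_neg] at hg14
  have hg15 := R.iden10 x2 x3 x1 a2 a1 (N1 x3) (N1 x1) (N2 a2) (N2 a1)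
  simp only [map_add, map_sub, map_zero, map_neg, LinearMap.add_apply, LinearMap.sub_apply, LinearMap.zero_apply, LinearMap.neg_apply, add_zero, zero_add, sub_zero, zero_sub, sub_self, neg_zero, neg_neg] at hg15
  have hg16 := R.iden4 (N2 a2) (N2 a1) a2 a1 x2 x1 x3
  simp only [map_add, map_sub, map_zero, map_neg, LinearMap.add_apply, LinearMap.sub_apply, LinearMap.zero_apply, LinearMap.neg_apply, add_zero, zero_add, sub_zero, zero_sub, sub_self, neg_zero, neg_neg] at hg16
  have hg17 := R.iden4 (N2 a2) (N2 a1) a2 a1 x1 x3 x2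
  simp only [map_add, map_sub, map_zero, map_neg, LinearMap.add_apply, LinearMap.sub_apply, LinearMap.zero_apply, LinearMap.neg_apply, add_zero, zero_add, sub_zero, zero_sub, sub_self, neg_zero, neg_neg] at hg17
  have hg18 := R.iden8 x3 x1 x2 a2 a1 0 (N1 x1) 0 0 0
  simp only [map_add, map_sub, map_zero, map_neg, LinearMap.add_apply, LinearMap.sub_apply, LinearMap.zero_apply, LinearMap.neg_apply, add_zero, zero_add, sub_zero, zero_sub, sub_self, neg_zero, neg_neg] at hg18
  have hg19 := R.iden10 x3 x1 x2 a1 a2 (N1 x1) (N1 x2) (N2 a1) (N2 a2)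
  simp only [map_add, map_sub, map_zero, map_neg, LinearMap.add_apply, LinearMap.sub_apply, LinearMap.zero_apply, LinearMap.neg_apply, add_zero, zero_add, sub_zero, zero_sub, sub_self, neg_zero, neg_neg] at hg19
  have hg20 := R.iden8 x2 x3 x1 a2 a1 (N1 x2) 0 0 0 0
  simp only [map_add, map_sub, map_zero, map_neg, LinearMap.add_apply, LinearMap.sub_apply, LinearMap.zero_apply, LinearMap.neg_apply, add_zero, zero_add, sub_zero, zero_sub, sub_self, neg_zero, neg_neg] at hg20
  have hg21 := R.iden10 x2 x3 x1 a1 a2 (N1 x3) (N1 x1) (N2 a1) (N2 a2)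
  simp only [map_add, map_sub, map_zero, map_neg, LinearMap.add_apply, LinearMap.sub_apply, LinearMap.zero_apply, LinearMap.neg_apply, add_zero, zero_add, sub_zero, zero_sub, sub_self, neg_zero, neg_neg] at hg21
  have hg22 := R.iden10 x2 x1 x3 a2 a1 (N1 x1) 0 0 0
  simp only [map_add, map_sub, map_zero, map_neg, LinearMap.add_apply, LinearMap.sub_apply, LinearMap.zero_apply, LinearMap.neg_apply, add_zero, zero_add, sub_zero, zero_sub, sub_self, neg_zero, neg_neg] at hg22
  have hsw0 : (R.rV.ρ x3 x1 (R.pV.ρ a1 a2 (N1 x2))) = -(R.rV.ρ x1 x3 (R.pV.ρ a1 a2 (N1 x2))) := by (try rw [Rep3.skew' R.rV x3 x1 (R.pV.ρ a1 a2 (N1 x2))]); (try simp only [map_neg, LinearMap.neg_apply, neg_neg])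
  have hsw1 : (R.rV.ρ x3 x1 (R.B (N2 a1) a2 x2)) = -(R.rV.ρ x1 x3 (R.B (N2 a1) a2 x2)) := by (try rw [Rep3.skew' R.rV x3 x1 (R.B (N2 a1) a2 x2)]); (try simp only [map_neg, LinearMap.neg_apply, neg_neg])
  have hsw2 : (R.rV.ρ x3 x1 (R.B (N2 a2) a1 x2)) = -(R.rV.ρ x1 x3 (R.B (N2 a2) a1 x2)) := by (try rw [Rep3.skew' R.rV x3 x1 (R.B (N2 a2) a1 x2)]); (try simp only [map_neg, LinearMap.neg_apply, neg_neg])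
  have hsw3 : (R.rV.ρ x3 (M.ψ.ρ a1 a2 x1) (N1 x2)) = -(R.rV.ρ (M.ψ.ρ a1 a2 x1) x3 (N1 x2)) := by (try rw [Rep3.skew' R.rV x3 (M.ψ.ρ a1 a2 x1) (N1 x2)]); (try simp only [map_neg, LinearMap.neg_apply, neg_neg])
  have hsw4 : (N1 (M.Lg.br x1 (M.ψ.ρ a1 a2 x2) x3)) = -(N1 (M.Lg.br (M.ψ.ρ a1 a2 x2) x1 x3)) := by (try rw [three_swap12 M.Lg x1 (M.ψ.ρ a1 a2 x2) x3]); (try simp only [map_neg, LinearMap.neg_apply, neg_neg])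
  have hsw5 : (N1 (M.Lg.br x1 x2 (M.ψ.ρ a1 a2 x3))) = (N1 (M.Lg.br (M.ψ.ρ a1 a2 x3) x1 x2)) := by (try rw [three_swap23 M.Lg x1 x2 (M.ψ.ρ a1 a2 x3)]); (try simp only [map_neg, LinearMap.neg_apply, neg_neg]); (try rw [three_swap12 M.Lg x1 (M.ψ.ρ a1 a2 x3) x2]); (try simp only [map_neg, LinearMap.neg_apply, neg_neg])
  have hsw6 : (R.pV.ρ a1 a2 (R.rV.ρ x3 x1 (N1 x2))) = -(R.pV.ρ a1 a2 (R.rV.ρ x1 x3 (N1 x2))) := by (try rw [Rep3.skew' R.rV x3 x1 (N1 x2)]); (try simp only [map_neg, LinearMap.neg_apply, neg_neg])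
  have hsw7 : (R.rV.ρ x1 x2 (R.pV.ρ a2 a1 (N1 x3))) = -(R.rV.ρ x1 x2 (R.pV.ρ a1 a2 (N1 x3))) := by (try rw [Rep3.skew' R.pV a2 a1 (N1 x3)]); (try simp only [map_neg, LinearMap.neg_apply, neg_neg])
  have hsw8 : (R.pV.ρ a2 a1 (R.rV.ρ x1 x2 (N1 x3))) = -(R.pV.ρ a1 a2 (R.rV.ρ x1 x2 (N1 x3))) := by (try rw [Rep3.skew' R.pV a2 a1 (R.rV.ρ x1 x2 (N1 x3))]); (try simp only [map_neg, LinearMap.neg_apply, neg_neg])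
  have hsw9 : (R.B (N2 a2) (M.ρ.ρ x3 x2 a1) x1) = -(R.B (N2 a2) (M.ρ.ρ x2 x3 a1) x1) := by (try rw [Rep3.skew' M.ρ x3 x2 a1]); (try simp only [map_neg, LinearMap.neg_apply, neg_neg])
  have hsw10 : (R.B (N2 a1) (M.ρ.ρ x2 x1 a2) x3) = -(R.B (N2 a1) (M.ρ.ρ x1 x2 a2) x3) := by (try rw [Rep3.skew' M.ρ x2 x1 a2]); (try simp only [map_neg, LinearMap.neg_apply, neg_neg])
  have hsw11 : (R.rV.ρ x2 x1 (R.B (N2 a1) a2 x3)) = -(R.rV.ρ x1 x2 (R.B (N2 a1) a2 x3)) := by (try rw [Rep3.skew' R.rV x2 x1 (R.B (N2 a1) a2 x3)]); (try simp only [map_neg, LinearMap.neg_apply, neg_neg])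
  have hsw12 : (R.B (N2 a1) a2 (M.Lg.br x3 x2 x1)) = -(R.B (N2 a1) a2 (M.Lg.br x1 x2 x3)) := by (try rw [three_swap12 M.Lg x3 x2 x1]); (try simp only [map_neg, LinearMap.neg_apply, neg_neg]); (try rw [three_swap23 M.Lg x2 x3 x1]); (try simp only [map_neg, LinearMap.neg_apply, neg_neg]); (try rw [three_swap12 M.Lg x2 x1 x3]); (try simp only [map_neg, LinearMap.neg_apply, neg_neg])
  have hsw13 : (R.B (R.rW.ρ x2 x2 (N2 a1)) a2 x3) = 0 := by simp only [M.Lg.alt₁, M.Lg.alt₂, M.Lh.alt₁, M.Lh.alt₂, R.rV.skew, R.pV.skew, R.rW.skew, R.pW.skew, M.ρ.skew, M.ψ.skew, map_zero, LinearMap.zero_apply]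
  have hsw14 : (R.B (R.rW.ρ x3 x1 (N2 a2)) a1 x2) = -(R.B (R.rW.ρ x1 x3 (N2 a2)) a1 x2) := by (try rw [Rep3.skew' R.rW x3 x1 (N2 a2)]); (try simp only [map_neg, LinearMap.neg_apply, neg_neg])
  have hsw15 : (R.pV.ρ a1 a2 (R.rV.ρ x2 x1 (N1 x3))) = -(R.pV.ρ a1 a2 (R.rV.ρ x1 x2 (N1 x3))) := by (try rw [Rep3.skew' R.rV x2 x1 (N1 x3)]); (try simp only [map_neg, LinearMap.neg_apply, neg_neg])
  have hsw16 : (R.B (R.rW.ρ x2 x2 (N2 a2)) a1 x1) = 0 := by simp only [M.Lg.alt₁, M.Lg.alt₂, M.Lh.alt₁, M.Lh.alt₂, R.rV.skew, R.pV.skew, R.rW.skew, R.pW.skew, M.ρ.skew, M.ψ.skew, map_zero, LinearMap.zero_apply]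
  have hsw17 : (N1 (M.ψ.ρ a2 a1 (M.Lg.br x2 x3 x1))) = -(N1 (M.ψ.ρ a1 a2 (M.Lg.br x1 x2 x3))) := by (try rw [three_swap23 M.Lg x2 x3 x1]); (try simp only [map_neg, LinearMap.neg_apply, neg_neg]); (try rw [three_swap12 M.Lg x2 x1 x3]); (try simp only [map_neg, LinearMap.neg_apply, neg_neg]); (try rw [Rep3.skew' M.ψ a2 a1 (M.Lg.br x1 x2 x3)]); (try simp only [map_neg, LinearMap.neg_apply, neg_neg])
  have hsw18 : (N1 (M.Lg.br (M.ψ.ρ a2 a1 x2) x3 x1)) = (N1 (M.Lg.br (M.ψ.ρ a1 a2 x2) x1 x3)) := by (try rw [Rep3.skew' M.ψ a2 a1 x2]); (try simp only [map_neg, LinearMap.neg_apply, neg_neg]); (try rw [three_swap23 M.Lg (M.ψ.ρ a1 a2 x2) x3 x1]); (try simp only [map_neg, LinearMap.neg_apply, neg_neg])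
  have hsw19 : (N1 (M.Lg.br x2 (M.ψ.ρ a2 a1 x3) x1)) = -(N1 (M.Lg.br (M.ψ.ρ a1 a2 x3) x1 x2)) := by (try rw [Rep3.skew' M.ψ a2 a1 x3]); (try simp only [map_neg, LinearMap.neg_apply, neg_neg]); (try rw [three_swap12 M.Lg x2 (M.ψ.ρ a1 a2 x3) x1]); (try simp only [map_neg, LinearMap.neg_apply, neg_neg]); (try rw [three_swap23 M.Lg (M.ψ.ρ a1 a2 x3) x2 x1]); (try simp only [map_neg, LinearMap.neg_apply, neg_neg])
  have hsw20 : (N1 (M.Lg.br x2 x3 (M.ψ.ρ a2 a1 x1))) = -(N1 (M.Lg.br (M.ψ.ρ a1 a2 x1) x2 x3)) := by (try rw [Rep3.skew' M.ψ a2 a1 x1]); (try simp only [map_neg, LinearMap.neg_apply, neg_neg]); (try rw [three_swap23 M.Lg x2 x3 (M.ψ.ρ a1 a2 x1)]); (try simp only [map_neg, LinearMap.neg_apply, neg_neg]); (try rw [three_swap12 M.Lg x2 (M.ψ.ρ a1 a2 x1) x3]); (try simp only [map_neg, LinearMap.neg_apply, neg_neg])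
  have hsw21 : (R.rV.ρ x3 (M.ψ.ρ a2 a1 x2) (N1 x1)) = (R.rV.ρ (M.ψ.ρ a1 a2 x2) x3 (N1 x1)) := by (try rw [Rep3.skew' M.ψ a2 a1 x2]); (try simp only [map_neg, LinearMap.neg_apply, neg_neg]); (try rw [Rep3.skew' R.rV x3 (M.ψ.ρ a1 a2 x2) (N1 x1)]); (try simp only [map_neg, LinearMap.neg_apply, neg_neg])
  have hsw22 : (R.pV.ρ (M.ρ.ρ x3 x2 a1) a2 (N1 x1)) = (R.pV.ρ a2 (M.ρ.ρ x2 x3 a1) (N1 x1)) := by (try rw [Rep3.skew' M.ρ x3 x2 a1]); (try simp only [map_neg, LinearMap.neg_apply, neg_neg]); (try rw [Rep3.skew' R.pV (M.ρ.ρ x2 x3 a1) a2 (N1 x1)]); (try simp only [map_neg, LinearMap.neg_apply, neg_neg])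
  have hsw23 : (R.rV.ρ x1 (M.ψ.ρ a2 a1 x2) (N1 x3)) = (R.rV.ρ (M.ψ.ρ a1 a2 x2) x1 (N1 x3)) := by (try rw [Rep3.skew' M.ψ a2 a1 x2]); (try simp only [map_neg, LinearMap.neg_apply, neg_neg]); (try rw [Rep3.skew' R.rV x1 (M.ψ.ρ a1 a2 x2) (N1 x3)]); (try simp only [map_neg, LinearMap.neg_apply, neg_neg])
  have hsw24 : (R.pV.ρ (M.ρ.ρ x1 x2 a1) a2 (N1 x3)) = -(R.pV.ρ a2 (M.ρ.ρ x1 x2 a1) (N1 x3)) := by (try rw [Rep3.skew' R.pV (M.ρ.ρ x1 x2 a1) a2 (N1 x3)]); (try simp only [map_neg, LinearMap.neg_apply, neg_neg])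
  have hsw25 : (R.B (N2 a1) (M.ρ.ρ x3 x2 a2) x1) = -(R.B (N2 a1) (M.ρ.ρ x2 x3 a2) x1) := by (try rw [Rep3.skew' M.ρ x3 x2 a2]); (try simp only [map_neg, LinearMap.neg_apply, neg_neg])
  have hsw26 : (R.rV.ρ x3 x2 (R.B (N2 a1) a2 x1)) = -(R.rV.ρ x2 x3 (R.B (N2 a1) a2 x1)) := by (try rw [Rep3.skew' R.rV x3 x2 (R.B (N2 a1) a2 x1)]); (try simp only [map_neg, LinearMap.neg_apply, neg_neg])
  have hsw27 : (R.B (N2 a1) a2 (M.Lg.br x1 x3 x2)) = -(R.B (N2 a1) a2 (M.Lg.br x1 x2 x3)) := by (try rw [three_swap23 M.Lg x1 x3 x2]); (try simp only [map_neg, LinearMap.neg_apply, neg_neg])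
  have hsw28 : (R.B (R.rW.ρ x3 x3 (N2 a1)) a2 x1) = 0 := by simp only [M.Lg.alt₁, M.Lg.alt₂, M.Lh.alt₁, M.Lh.alt₂, R.rV.skew, R.pV.skew, R.rW.skew, R.pW.skew, M.ρ.skew, M.ψ.skew, map_zero, LinearMap.zero_apply]
  have hsw29 : (R.rV.ρ x1 (M.ψ.ρ a1 a2 x3) (N1 x2)) = -(R.rV.ρ (M.ψ.ρ a1 a2 x3) x1 (N1 x2)) := by (try rw [Rep3.skew' R.rV x1 (M.ψ.ρ a1 a2 x3) (N1 x2)]); (try simp only [map_neg, LinearMap.neg_apply, neg_neg])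
  have hsw30 : (R.B (N2 a1) a2 (M.Lg.br x2 x3 x1)) = (R.B (N2 a1) a2 (M.Lg.br x1 x2 x3)) := by (try rw [three_swap23 M.Lg x2 x3 x1]); (try simp only [map_neg, LinearMap.neg_apply, neg_neg]); (try rw [three_swap12 M.Lg x2 x1 x3]); (try simp only [map_neg, LinearMap.neg_apply, neg_neg])
  have hsw31 : (R.B (R.rW.ρ x3 x3 (N2 a1)) a2 x2) = 0 := by simp only [M.Lg.alt₁, M.Lg.alt₂, M.Lh.alt₁, M.Lh.alt₂, R.rV.skew, R.pV.skew, R.rW.skew, R.pW.skew, M.ρ.skew, M.ψ.skew, map_zero, LinearMap.zero_apply]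
  have hsw32 : (R.rV.ρ x2 x3 (R.pV.ρ a2 a1 (N1 x1))) = -(R.rV.ρ x2 x3 (R.pV.ρ a1 a2 (N1 x1))) := by (try rw [Rep3.skew' R.pV a2 a1 (N1 x1)]); (try simp only [map_neg, LinearMap.neg_apply, neg_neg])
  have hsw33 : (R.pV.ρ a2 a1 (R.rV.ρ x2 x3 (N1 x1))) = -(R.pV.ρ a1 a2 (R.rV.ρ x2 x3 (N1 x1))) := by (try rw [Rep3.skew' R.pV a2 a1 (R.rV.ρ x2 x3 (N1 x1))]); (try simp only [map_neg, LinearMap.neg_apply, neg_neg])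
  have hsw34 : (R.B (N2 a2) a1 (M.Lg.br x2 x1 x3)) = -(R.B (N2 a2) a1 (M.Lg.br x1 x2 x3)) := by (try rw [three_swap12 M.Lg x2 x1 x3]); (try simp only [map_neg, LinearMap.neg_apply, neg_neg])
  have hsw35 : (R.B (N2 a1) a2 (M.Lg.br x2 x1 x3)) = -(R.B (N2 a1) a2 (M.Lg.br x1 x2 x3)) := by (try rw [three_swap12 M.Lg x2 x1 x3]); (try simp only [map_neg, LinearMap.neg_apply, neg_neg])
  have hsw36 : (R.rV.ρ x2 x1 (R.B (N2 a2) a1 x3)) = -(R.rV.ρ x1 x2 (R.B (N2 a2) a1 x3)) := by (try rw [Rep3.skew' R.rV x2 x1 (R.B (N2 a2) a1 x3)]); (try simp only [map_neg, LinearMap.neg_apply, neg_neg])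
  have hsw37 : (R.B (N2 a2) a1 (M.Lg.br x1 x3 x2)) = -(R.B (N2 a2) a1 (M.Lg.br x1 x2 x3)) := by (try rw [three_swap23 M.Lg x1 x3 x2]); (try simp only [map_neg, LinearMap.neg_apply, neg_neg])
  have hsw38 : (R.rV.ρ x3 x2 (R.B (N2 a2) a1 x1)) = -(R.rV.ρ x2 x3 (R.B (N2 a2) a1 x1)) := by (try rw [Rep3.skew' R.rV x3 x2 (R.B (N2 a2) a1 x1)]); (try simp only [map_neg, LinearMap.neg_apply, neg_neg])
  have hsw39 : (R.B (N2 a2) a1 (M.Lg.br x3 x1 x2)) = (R.B (N2 a2) a1 (M.Lg.br x1 x2 x3)) := by (try rw [three_swap12 M.Lg x3 x1 x2]); (try simp only [map_neg, LinearMap.neg_apply, neg_neg]); (try rw [three_swap23 M.Lg x1 x3 x2]); (try simp only [map_neg, LinearMap.neg_apply, neg_neg])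
  have hsw40 : (R.B (R.rW.ρ x1 x1 (N2 a2)) a1 x3) = 0 := by simp only [M.Lg.alt₁, M.Lg.alt₂, M.Lh.alt₁, M.Lh.alt₂, R.rV.skew, R.pV.skew, R.rW.skew, R.pW.skew, M.ρ.skew, M.ψ.skew, map_zero, LinearMap.zero_apply]
  have hsw41 : (R.B (R.rW.ρ x3 x3 (N2 a2)) a1 x2) = 0 := by simp only [M.Lg.alt₁, M.Lg.alt₂, M.Lh.alt₁, M.Lh.alt₂, R.rV.skew, R.pV.skew, R.rW.skew, R.pW.skew, M.ρ.skew, M.ψ.skew, map_zero, LinearMap.zero_apply]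
  linear_combination (norm := module) - (R.iden9 x1 x2 a2 a1 (N1 x3)) - hg0 - hg0 + hg1 + hg1 + hg2 + hg2 + hg2 + hg2 + hg3 + hg3 + (R.iden5 x1 x2 a1 a2 (N1 x3)) - hg4 - hg4 - hg4 - hg4 + hg5 + hg5 + hg5 + hg5 + (R.iden11 a1 a2 x2 x1 (N1 x3)) - hg6 - hg6 - hg7 - hg7 + hg8 + hg8 - (lin3 N1 (M.mp1 a2 a1 x2 x3 x1)) - hg9 - hg9 + (R.iden5 x3 x2 a2 a1 (N1 x1)) + (R.iden5 x2 x3 a1 a2 (N1 x1)) + (R.iden11 a1 a2 x1 x2 (N1 x3)) - (R.iden5 x1 x2 a2 a1 (N1 x3)) + hg10 + hg10 + hg10 + hg10 - hg11 - hg12 - hg12 - hg13 - hg13 + hg14 + hg14 + (R.iden1 a1 a2 x1 x3 (N1 x2)) - hg15 - hg15 - (R.iden9 x2 x3 a2 a1 (N1 x1)) + hg16 + hg17 - hg18 - hg18 + hg19 + hg19 - hg20 - hg20 + hg21 + hg21 - hg22 - hg22 - hg22 - hg22 - hg22 - hg22 + hsw0 - hsw1 - hsw2 + hsw3 - hsw4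 - hsw5 - hsw6 + hsw7 - hsw8 - hsw9 - hsw9 + hsw10 + hsw10 + hsw11 - hsw12 - hsw12 - hsw13 - hsw13 + hsw14 + hsw14 + hsw15 - hsw16 - hsw16 + hsw17 - hsw18 - hsw19 - hsw20 - hsw21 + hsw22 + hsw23 - hsw24 - hsw25 - hsw25 - hsw25 - hsw25 + hsw26 - hsw27 - hsw28 - hsw28 + hsw29 + hsw30 + hsw30 + hsw30 + hsw30 + hsw31 + hsw31 + hsw32 - hsw33 - hsw34 + hsw35 + hsw36 - hsw37 + hsw38 - hsw39 - hsw39 - hsw40 - hsw40 - hsw41 - hsw41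

set_option maxHeartbeats 4000000 in
set_option linter.unusedTactic false in
private theorem d1_aux4
    {k : Type*} [Field k] {g h V W : Type*}
    [AddCommGroup g] [Module k g] [AddCommGroup h] [Module k h]
    [AddCommGroup V] [Module k V] [AddCommGroup W] [Module k W]
    (M : MatchedPair k g h) (R : MPRep (V := V) (W := W) M)
    (N1 : g →ₗ[k] V) (N2 : h →ₗ[k] W) (c : Cochain2 k g h V W)
    (hd : IsD1 M R.toData N1 N2 c) :
    (∀ (x1 x2 x3 : g) (a1 a2 : h), R.toData.B (c.ν x1 x3 a2) a1 x2 + c.φ (M.ρ.ρ x1 x3 a2) a1 x2 - R.toData.B (c.ν x2 x3 a2) a1 x1 - c.φ (M.ρ.ρ x2 x3 a2) a1 x1 + R.toData.ρV x1 x2 (c.φ a1 a2 x3) + c.ω x1 x2 (M.ψ.ρ a1 a2 x3) - R.toData.B (c.ν x1 x2 a1) a2 x3 - c.φ (M.ρ.ρ x1 x2 a1) a2 x3 = 0) := by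
  obtain ⟨hω, hν, hφ, hθ⟩ := hd
  intro x1 x2 x3 a1 a2
  simp only [MPRep.toData, hω, hν, hφ, hθ, map_add, map_sub, LinearMap.add_apply, LinearMap.sub_apply]
  have hg0 := R.iden8 x1 x2 x3 a1 a2 (N1 x1) (N1 x2) (N1 x3) (N2 a1) (N2 a2)
  simp only [map_add, map_sub, map_zero, map_neg, LinearMap.add_apply, LinearMap.sub_apply, LinearMap.zero_apply, LinearMap.neg_apply, add_zero, zero_add, sub_zero, zero_sub, sub_self, neg_zero, neg_neg] at hg0
  have hg1 := R.iden8 x1 x2 x3 a1 a2 0 0 (N1 x3) 0 0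
  simp only [map_add, map_sub, map_zero, map_neg, LinearMap.add_apply, LinearMap.sub_apply, LinearMap.zero_apply, LinearMap.neg_apply, add_zero, zero_add, sub_zero, zero_sub, sub_self, neg_zero, neg_neg] at hg1
  have hg2 := R.iden8 x1 x3 x2 a1 a2 0 (N1 x3) 0 0 0
  simp only [map_add, map_sub, map_zero, map_neg, LinearMap.add_apply, LinearMap.sub_apply, LinearMap.zero_apply, LinearMap.neg_apply, add_zero, zero_add, sub_zero, zero_sub, sub_self, neg_zero, neg_neg] at hg2
  have hg3 := R.iden10 x2 x1 x3 a1 a2 0 (N1 x3) 0 0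
  simp only [map_add, map_sub, map_zero, map_neg, LinearMap.add_apply, LinearMap.sub_apply, LinearMap.zero_apply, LinearMap.neg_apply, add_zero, zero_add, sub_zero, zero_sub, sub_self, neg_zero, neg_neg] at hg3
  have hsw0 : (R.rV.ρ x1 (M.ψ.ρ a1 a2 x3) (N1 x2)) = -(R.rV.ρ (M.ψ.ρ a1 a2 x3) x1 (N1 x2)) := by (try rw [Rep3.skew' R.rV x1 (M.ψ.ρ a1 a2 x3) (N1 x2)]); (try simp only [map_neg, LinearMap.neg_apply, neg_neg])
  linear_combination (norm := module) (R.iden7 x1 x2 a1 a2 (N1 x3)) - (R.iden5 x1 x3 a1 a2 (N1 x2)) + (R.iden5 x2 x3 a1 a2 (N1 x1)) + hg0 + (lin3m N1 (M.mp2 x1 x2 x3 a1 a2)) - hg1 - hg2 + hg3 + hsw0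

set_option maxHeartbeats 4000000 in
set_option linter.unusedTactic false in
private theorem d1_aux5
    {k : Type*} [Field k] {g h V W : Type*}
    [AddCommGroup g] [Module k g] [AddCommGroup h] [Module k h]
    [AddCommGroup V] [Module k V] [AddCommGroup W] [Module k W]
    (M : MatchedPair k g h) (R : MPRep (V := V) (W := W) M)
    (N1 : g →ₗ[k] V) (N2 : h →ₗ[k] W) (c : Cochain2 k g h V W)
    (hd : IsD1 M R.toData N1 N2 c) :
    (∀ (a1 a2 a3 : h) (x1 x2 : g), R.toData.A (c.φ a1 a3 x2) x1 a2 + c.ν (M.ψ.ρ a1 a3 x2) x1 a2 - R.toData.A (c.φ a2 a3 x2) x1 a1 - c.ν (M.ψ.ρ a2 a3 x2) x1 a1 + R.toData.ψW a1 a2 (c.ν x1 x2 a3) + c.θ a1 a2 (M.ρ.ρ x1 x2 a3) - R.toData.A (c.φ a1 a2 x1) x2 a3 - c.ν (M.ψ.ρ a1 a2 x1) x2 a3 = 0) := by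
  obtain ⟨hω, hν, hφ, hθ⟩ := hd
  intro a1 a2 a3 x1 x2
  simp only [MPRep.toData, hω, hν, hφ, hθ, map_add, map_sub, LinearMap.add_apply, LinearMap.sub_apply]
  have hg0 := R.iden16 (N1 x1) (N1 x1) x1 x2 a1 a2 a3
  simp only [map_add, map_sub, map_zero, map_neg, LinearMap.add_apply, LinearMap.sub_apply, LinearMap.zero_apply, LinearMap.neg_apply, add_zero, zero_add, sub_zero, zero_sub, sub_self, neg_zero, neg_neg] at hg0
  have hg1 := R.iden16 (N1 x1) (N1 x2) x1 x2 a1 a2 a3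
  simp only [map_add, map_sub, map_zero, map_neg, LinearMap.add_apply, LinearMap.sub_apply, LinearMap.zero_apply, LinearMap.neg_apply, add_zero, zero_add, sub_zero, zero_sub, sub_self, neg_zero, neg_neg] at hg1
  have hg2 := R.iden16 (N1 x2) (N1 x1) x1 x2 a1 a2 a3
  simp only [map_add, map_sub, map_zero, map_neg, LinearMap.add_apply, LinearMap.sub_apply, LinearMap.zero_apply, LinearMap.neg_apply, add_zero, zero_add, sub_zero, zero_sub, sub_self, neg_zero, neg_neg] at hg2
  have hg3 := R.iden16 (N1 x1) (N1 x2) x2 x1 a1 a2 a3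
  simp only [map_add, map_sub, map_zero, map_neg, LinearMap.add_apply, LinearMap.sub_apply, LinearMap.zero_apply, LinearMap.neg_apply, add_zero, zero_add, sub_zero, zero_sub, sub_self, neg_zero, neg_neg] at hg3
  have hg4 := R.iden16 (N1 x2) (N1 x1) x2 x1 a1 a2 a3
  simp only [map_add, map_sub, map_zero, map_neg, LinearMap.add_apply, LinearMap.sub_apply, LinearMap.zero_apply, LinearMap.neg_apply, add_zero, zero_add, sub_zero, zero_sub, sub_self, neg_zero, neg_neg] at hg4
  have hg5 := R.iden20 a1 a3 a2 x1 x2 (N1 x1) (N1 x2) (N2 a1) (N2 a3) (N2 a2)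
  simp only [map_add, map_sub, map_zero, map_neg, LinearMap.add_apply, LinearMap.sub_apply, LinearMap.zero_apply, LinearMap.neg_apply, add_zero, zero_add, sub_zero, zero_sub, sub_self, neg_zero, neg_neg] at hg5
  have hg6 := R.iden20 a1 a3 a2 x2 x1 (N1 x2) (N1 x1) (N2 a1) (N2 a3) (N2 a2)
  simp only [map_add, map_sub, map_zero, map_neg, LinearMap.add_apply, LinearMap.sub_apply, LinearMap.zero_apply, LinearMap.neg_apply, add_zero, zero_add, sub_zero, zero_sub, sub_self, neg_zero, neg_neg] at hg6
  have hg7 := R.iden22 a1 a2 a3 x1 x2 (N1 x1) (N1 x2) (N2 a2) (N2 a3)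
  simp only [map_add, map_sub, map_zero, map_neg, LinearMap.add_apply, LinearMap.sub_apply, LinearMap.zero_apply, LinearMap.neg_apply, add_zero, zero_add, sub_zero, zero_sub, sub_self, neg_zero, neg_neg] at hg7
  have hg8 := R.iden16 (N1 x1) 0 x1 x2 a1 a2 a3
  simp only [map_add, map_sub, map_zero, map_neg, LinearMap.add_apply, LinearMap.sub_apply, LinearMap.zero_apply, LinearMap.neg_apply, add_zero, zero_add, sub_zero, zero_sub, sub_self, neg_zero, neg_neg] at hg8
  have hg9 := R.iden20 a1 a2 a3 x1 x2 0 0 0 0 (N2 a2)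
  simp only [map_add, map_sub, map_zero, map_neg, LinearMap.add_apply, LinearMap.sub_apply, LinearMap.zero_apply, LinearMap.neg_apply, add_zero, zero_add, sub_zero, zero_sub, sub_self, neg_zero, neg_neg] at hg9
  have hg10 := R.iden22 a1 a2 a3 x1 x2 (N1 x1) 0 0 0
  simp only [map_add, map_sub, map_zero, map_neg, LinearMap.add_apply, LinearMap.sub_apply, LinearMap.zero_apply, LinearMap.neg_apply, add_zero, zero_add, sub_zero, zero_sub, sub_self, neg_zero, neg_neg] at hg10
  have hg11 := R.iden22 a1 a2 a3 x1 x2 0 (N1 x2) 0 0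
  simp only [map_add, map_sub, map_zero, map_neg, LinearMap.add_apply, LinearMap.sub_apply, LinearMap.zero_apply, LinearMap.neg_apply, add_zero, zero_add, sub_zero, zero_sub, sub_self, neg_zero, neg_neg] at hg11
  have hg12 := R.iden22 a1 a2 a3 x1 x2 0 0 0 (N2 a2)
  simp only [map_add, map_sub, map_zero, map_neg, LinearMap.add_apply, LinearMap.sub_apply, LinearMap.zero_apply, LinearMap.neg_apply, add_zero, zero_add, sub_zero, zero_sub, sub_self, neg_zero, neg_neg] at hg12
  have hg13 := R.iden16 (N1 x1) 0 x2 x1 a1 a2 a3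
  simp only [map_add, map_sub, map_zero, map_neg, LinearMap.add_apply, LinearMap.sub_apply, LinearMap.zero_apply, LinearMap.neg_apply, add_zero, zero_add, sub_zero, zero_sub, sub_self, neg_zero, neg_neg] at hg13
  have hg14 := R.iden20 a1 a2 a3 x2 x1 (N1 x2) 0 0 0 0
  simp only [map_add, map_sub, map_zero, map_neg, LinearMap.add_apply, LinearMap.sub_apply, LinearMap.zero_apply, LinearMap.neg_apply, add_zero, zero_add, sub_zero, zero_sub, sub_self, neg_zero, neg_neg] at hg14
  have hg15 := R.iden20 a1 a2 a3 x2 x1 0 (N1 x1) 0 0 0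
  simp only [map_add, map_sub, map_zero, map_neg, LinearMap.add_apply, LinearMap.sub_apply, LinearMap.zero_apply, LinearMap.neg_apply, add_zero, zero_add, sub_zero, zero_sub, sub_self, neg_zero, neg_neg] at hg15
  have hg16 := R.iden20 a1 a2 a3 x2 x1 0 0 (N2 a1) 0 0
  simp only [map_add, map_sub, map_zero, map_neg, LinearMap.add_apply, LinearMap.sub_apply, LinearMap.zero_apply, LinearMap.neg_apply, add_zero, zero_add, sub_zero, zero_sub, sub_self, neg_zero, neg_neg] at hg16
  have hg17 := R.iden20 a1 a2 a3 x2 x1 0 0 0 (N2 a2) 0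
  simp only [map_add, map_sub, map_zero, map_neg, LinearMap.add_apply, LinearMap.sub_apply, LinearMap.zero_apply, LinearMap.neg_apply, add_zero, zero_add, sub_zero, zero_sub, sub_self, neg_zero, neg_neg] at hg17
  have hg18 := R.iden20 a1 a2 a3 x2 x1 0 0 0 0 (N2 a2)
  simp only [map_add, map_sub, map_zero, map_neg, LinearMap.add_apply, LinearMap.sub_apply, LinearMap.zero_apply, LinearMap.neg_apply, add_zero, zero_add, sub_zero, zero_sub, sub_self, neg_zero, neg_neg] at hg18
  have hg19 := R.iden22 a1 a2 a3 x2 x1 (N1 x2) 0 0 0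
  simp only [map_add, map_sub, map_zero, map_neg, LinearMap.add_apply, LinearMap.sub_apply, LinearMap.zero_apply, LinearMap.neg_apply, add_zero, zero_add, sub_zero, zero_sub, sub_self, neg_zero, neg_neg] at hg19
  have hg20 := R.iden20 a1 a3 a2 x1 x2 0 0 0 (N2 a2) 0
  simp only [map_add, map_sub, map_zero, map_neg, LinearMap.add_apply, LinearMap.sub_apply, LinearMap.zero_apply, LinearMap.neg_apply, add_zero, zero_add, sub_zero, zero_sub, sub_self, neg_zero, neg_neg] at hg20
  have hg21 := R.iden20 a1 a3 a2 x1 x2 0 0 0 (N2 a3) 0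
  simp only [map_add, map_sub, map_zero, map_neg, LinearMap.add_apply, LinearMap.sub_apply, LinearMap.zero_apply, LinearMap.neg_apply, add_zero, zero_add, sub_zero, zero_sub, sub_self, neg_zero, neg_neg] at hg21
  have hg22 := R.iden20 a1 a3 a2 x2 x1 0 0 0 (N2 a2) 0
  simp only [map_add, map_sub, map_zero, map_neg, LinearMap.add_apply, LinearMap.sub_apply, LinearMap.zero_apply, LinearMap.neg_apply, add_zero, zero_add, sub_zero, zero_sub, sub_self, neg_zero, neg_neg] at hg22
  have hsw0 : (R.pW.ρ (M.ρ.ρ x1 x2 a3) a1 (N2 a2)) = -(R.pW.ρ a1 (M.ρ.ρ x1 x2 a3) (N2 a2)) := by (try rw [Rep3.skew' R.pW (M.ρ.ρ x1 x2 a3) a1 (N2 a2)]); (try simp only [map_neg, LinearMap.neg_apply, neg_neg])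
  have hsw1 : (R.A (R.pV.ρ a3 a2 (N1 x2)) x1 a1) = -(R.A (R.pV.ρ a2 a3 (N1 x2)) x1 a1) := by (try rw [Rep3.skew' R.pV a3 a2 (N1 x2)]); (try simp only [map_neg, LinearMap.neg_apply, neg_neg])
  have hsw2 : (R.A (N1 x1) (M.ψ.ρ a3 a2 x2) a1) = -(R.A (N1 x1) (M.ψ.ρ a2 a3 x2) a1) := by (try rw [Rep3.skew' M.ψ a3 a2 x2]); (try simp only [map_neg, LinearMap.neg_apply, neg_neg])
  have hsw3 : (R.A (R.pV.ρ a3 a2 (N1 x1)) x2 a1) = -(R.A (R.pV.ρ a2 a3 (N1 x1)) x2 a1) := by (try rw [Rep3.skew' R.pV a3 a2 (N1 x1)]); (try simp only [map_neg, LinearMap.neg_apply, neg_neg])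
  have hsw4 : (R.A (N1 x2) (M.ψ.ρ a3 a2 x1) a1) = -(R.A (N1 x2) (M.ψ.ρ a2 a3 x1) a1) := by (try rw [Rep3.skew' M.ψ a3 a2 x1]); (try simp only [map_neg, LinearMap.neg_apply, neg_neg])
  linear_combination (norm := module) (R.iden19 a1 a2 x1 x2 (N2 a3)) - (R.iden17 a1 a3 x1 x2 (N2 a2)) + (R.iden17 a2 a3 x1 x2 (N2 a1)) + hg0 + hg0 - hg1 - hg2 - hg3 + hg4 + hg5 - hg6 - hg7 + (lin3m N2 (M.mp5 a1 a2 a3 x1 x2)) - hg8 - hg8 - hg9 - hg10 + hg11 - hg12 + hg13 + hg13 + hg14 + hg15 + hg16 + hg17 + hg18 + hg19 + hg19 + hg20 - hg21 - hg22 + hsw0 + hsw1 - hsw2 - hsw3 + hsw4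

set_option maxHeartbeats 4000000 in
set_option linter.unusedTactic false in
private theorem d1_aux6
    {k : Type*} [Field k] {g h V W : Type*}
    [AddCommGroup g] [Module k g] [AddCommGroup h] [Module k h]
    [AddCommGroup V] [Module k V] [AddCommGroup W] [Module k W]
    (M : MatchedPair k g h) (R : MPRep (V := V) (W := W) M)
    (N1 : g →ₗ[k] V) (N2 : h →ₗ[k] W) (c : Cochain2 k g h V W)
    (hd : IsD1 M R.toData N1 N2 c) :
    (∀ (a1 a2 : h) (x1 x2 x3 : g), R.toData.ψV a1 a2 (c.ω x1 x2 x3) + c.φ a1 a2 (M.Lg.br x1 x2 x3) + c.φ (M.ρ.ρ x2 x3 a1) a2 x1 + R.toData.B (c.ν x2 x3 a1) a2 x1 + c.φ a1 (M.ρ.ρ x2 x3 a2) x1 - R.toData.B (c.ν x2 x3 a2) a1 x1 - c.ω (M.ψ.ρ a1 a2 x1) x2 x3 - R.toData.ρV x2 x3 (c.φ a1 a2 x1) = 0) := by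
  obtain ⟨hω, hν, hφ, hθ⟩ := hd
  intro a1 a2 x1 x2 x3
  simp only [MPRep.toData, hω, hν, hφ, hθ, map_add, map_sub, LinearMap.add_apply, LinearMap.sub_apply]
  have hg0 := R.iden8 x2 x3 x1 a1 a2 0 0 0 (N2 a1) 0
  simp only [map_add, map_sub, map_zero, map_neg, LinearMap.add_apply, LinearMap.sub_apply, LinearMap.zero_apply, LinearMap.neg_apply, add_zero, zero_add, sub_zero, zero_sub, sub_self, neg_zero, neg_neg] at hg0
  have hg1 := R.iden8 x2 x3 x1 a2 a1 0 (N1 x3) 0 0 0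
  simp only [map_add, map_sub, map_zero, map_neg, LinearMap.add_apply, LinearMap.sub_apply, LinearMap.zero_apply, LinearMap.neg_apply, add_zero, zero_add, sub_zero, zero_sub, sub_self, neg_zero, neg_neg] at hg1
  have hg2 := R.iden10 x2 x1 x3 a2 a1 0 (N1 x3) 0 0
  simp only [map_add, map_sub, map_zero, map_neg, LinearMap.add_apply, LinearMap.sub_apply, LinearMap.zero_apply, LinearMap.neg_apply, add_zero, zero_add, sub_zero, zero_sub, sub_self, neg_zero, neg_neg] at hg2
  have hg3 := R.iden10 x2 x3 x1 a2 a1 0 0 (N2 a2) 0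
  simp only [map_add, map_sub, map_zero, map_neg, LinearMap.add_apply, LinearMap.sub_apply, LinearMap.zero_apply, LinearMap.neg_apply, add_zero, zero_add, sub_zero, zero_sub, sub_self, neg_zero, neg_neg] at hg3
  have hg4 := R.iden10 x1 x2 x3 a1 a2 (N1 x2) (N1 x3) (N2 a1) (N2 a2)
  simp only [map_add, map_sub, map_zero, map_neg, LinearMap.add_apply, LinearMap.sub_apply, LinearMap.zero_apply, LinearMap.neg_apply, add_zero, zero_add, sub_zero, zero_sub, sub_self, neg_zero, neg_neg] at hg4
  have hg5 := R.iden10 x1 x3 x2 a1 a2 (N1 x3) 0 0 0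
  simp only [map_add, map_sub, map_zero, map_neg, LinearMap.add_apply, LinearMap.sub_apply, LinearMap.zero_apply, LinearMap.neg_apply, add_zero, zero_add, sub_zero, zero_sub, sub_self, neg_zero, neg_neg] at hg5
  have hg6 := R.iden8 x1 x3 x2 a1 a2 0 0 0 0 (N2 a2)
  simp only [map_add, map_sub, map_zero, map_neg, LinearMap.add_apply, LinearMap.sub_apply, LinearMap.zero_apply, LinearMap.neg_apply, add_zero, zero_add, sub_zero, zero_sub, sub_self, neg_zero, neg_neg] at hg6
  have hg7 := R.iden8 x2 x1 x3 a2 a1 (N1 x2) 0 0 0 0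
  simp only [map_add, map_sub, map_zero, map_neg, LinearMap.add_apply, LinearMap.sub_apply, LinearMap.zero_apply, LinearMap.neg_apply, add_zero, zero_add, sub_zero, zero_sub, sub_self, neg_zero, neg_neg] at hg7
  have hg8 := R.iden10 x1 x2 x3 a1 a2 0 0 0 (N2 a2)
  simp only [map_add, map_sub, map_zero, map_neg, LinearMap.add_apply, LinearMap.sub_apply, LinearMap.zero_apply, LinearMap.neg_apply, add_zero, zero_add, sub_zero, zero_sub, sub_self, neg_zero, neg_neg] at hg8
  have hg9 := R.iden8 x2 x3 x1 a1 a2 (N1 x2) (N1 x3) (N1 x1) (N2 a1) (N2 a2)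
  simp only [map_add, map_sub, map_zero, map_neg, LinearMap.add_apply, LinearMap.sub_apply, LinearMap.zero_apply, LinearMap.neg_apply, add_zero, zero_add, sub_zero, zero_sub, sub_self, neg_zero, neg_neg] at hg9
  have hg10 := R.iden8 x2 x3 x1 a1 a2 0 0 (N1 x1) 0 0
  simp only [map_add, map_sub, map_zero, map_neg, LinearMap.add_apply, LinearMap.sub_apply, LinearMap.zero_apply, LinearMap.neg_apply, add_zero, zero_add, sub_zero, zero_sub, sub_self, neg_zero, neg_neg] at hg10
  have hsw0 : (R.pV.ρ a1 a2 (R.rV.ρ x3 x1 (N1 x2))) = -(R.pV.ρ a1 a2 (R.rV.ρ x1 x3 (N1 x2))) := by (try rw [Rep3.skew' R.rV x3 x1 (N1 x2)]); (try simp only [map_neg, LinearMap.neg_apply, neg_neg])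
  have hsw1 : (R.pV.ρ (M.ρ.ρ x2 x3 a1) a2 (N1 x1)) = -(R.pV.ρ a2 (M.ρ.ρ x2 x3 a1) (N1 x1)) := by (try rw [Rep3.skew' R.pV (M.ρ.ρ x2 x3 a1) a2 (N1 x1)]); (try simp only [map_neg, LinearMap.neg_apply, neg_neg])
  have hsw2 : (N1 (M.ψ.ρ (M.ρ.ρ x2 x3 a1) a2 x1)) = -(N1 (M.ψ.ρ a2 (M.ρ.ρ x2 x3 a1) x1)) := by (try rw [Rep3.skew' M.ψ (M.ρ.ρ x2 x3 a1) a2 x1]); (try simp only [map_neg, LinearMap.neg_apply, neg_neg])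
  have hsw3 : (R.rV.ρ x3 (M.ψ.ρ a1 a2 x1) (N1 x2)) = -(R.rV.ρ (M.ψ.ρ a1 a2 x1) x3 (N1 x2)) := by (try rw [Rep3.skew' R.rV x3 (M.ψ.ρ a1 a2 x1) (N1 x2)]); (try simp only [map_neg, LinearMap.neg_apply, neg_neg])
  have hsw4 : (R.rV.ρ x3 x1 (R.B (N2 a2) a1 x2)) = -(R.rV.ρ x1 x3 (R.B (N2 a2) a1 x2)) := by (try rw [Rep3.skew' R.rV x3 x1 (R.B (N2 a2) a1 x2)]); (try simp only [map_neg, LinearMap.neg_apply, neg_neg])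
  have hsw5 : (R.B (N2 a2) a1 (M.Lg.br x2 x3 x1)) = (R.B (N2 a2) a1 (M.Lg.br x1 x2 x3)) := by (try rw [three_swap23 M.Lg x2 x3 x1]); (try simp only [map_neg, LinearMap.neg_apply, neg_neg]); (try rw [three_swap12 M.Lg x2 x1 x3]); (try simp only [map_neg, LinearMap.neg_apply, neg_neg])
  have hsw6 : (R.B (N2 a2) (M.ρ.ρ x3 x1 a1) x2) = -(R.B (N2 a2) (M.ρ.ρ x1 x3 a1) x2) := by (try rw [Rep3.skew' M.ρ x3 x1 a1]); (try simp only [map_neg, LinearMap.neg_apply, neg_neg])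
  have hsw7 : (R.B (R.rW.ρ x3 x2 (N2 a2)) a1 x1) = -(R.B (R.rW.ρ x2 x3 (N2 a2)) a1 x1) := by (try rw [Rep3.skew' R.rW x3 x2 (N2 a2)]); (try simp only [map_neg, LinearMap.neg_apply, neg_neg])
  have hsw8 : (R.B (R.rW.ρ x2 x1 (N2 a2)) a1 x3) = -(R.B (R.rW.ρ x1 x2 (N2 a2)) a1 x3) := by (try rw [Rep3.skew' R.rW x2 x1 (N2 a2)]); (try simp only [map_neg, LinearMap.neg_apply, neg_neg])
  have hsw9 : (N1 (M.Lg.br (M.ψ.ρ a2 a1 x1) x2 x3)) = -(N1 (M.Lg.br (M.ψ.ρ a1 a2 x1) x2 x3)) := by (try rw [Rep3.skew' M.ψ a2 a1 x1]); (try simp only [map_neg, LinearMap.neg_apply, neg_neg])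
  have hsw10 : (N1 (M.ψ.ρ a2 a1 (M.Lg.br x1 x2 x3))) = -(N1 (M.ψ.ρ a1 a2 (M.Lg.br x1 x2 x3))) := by (try rw [Rep3.skew' M.ψ a2 a1 (M.Lg.br x1 x2 x3)]); (try simp only [map_neg, LinearMap.neg_apply, neg_neg])
  have hsw11 : (N1 (M.ψ.ρ (M.ρ.ρ x2 x3 a2) a1 x1)) = -(N1 (M.ψ.ρ a1 (M.ρ.ρ x2 x3 a2) x1)) := by (try rw [Rep3.skew' M.ψ (M.ρ.ρ x2 x3 a2) a1 x1]); (try simp only [map_neg, LinearMap.neg_apply, neg_neg])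
  have hsw12 : (R.rV.ρ x2 x3 (R.pV.ρ a2 a1 (N1 x1))) = -(R.rV.ρ x2 x3 (R.pV.ρ a1 a2 (N1 x1))) := by (try rw [Rep3.skew' R.pV a2 a1 (N1 x1)]); (try simp only [map_neg, LinearMap.neg_apply, neg_neg])
  have hsw13 : (R.pV.ρ a2 a1 (R.rV.ρ x2 x3 (N1 x1))) = -(R.pV.ρ a1 a2 (R.rV.ρ x2 x3 (N1 x1))) := by (try rw [Rep3.skew' R.pV a2 a1 (R.rV.ρ x2 x3 (N1 x1))]); (try simp only [map_neg, LinearMap.neg_apply, neg_neg])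
  have hsw14 : (R.pV.ρ (M.ρ.ρ x2 x3 a2) a1 (N1 x1)) = -(R.pV.ρ a1 (M.ρ.ρ x2 x3 a2) (N1 x1)) := by (try rw [Rep3.skew' R.pV (M.ρ.ρ x2 x3 a2) a1 (N1 x1)]); (try simp only [map_neg, LinearMap.neg_apply, neg_neg])
  linear_combination (norm := module) hg0 + hg1 - hg2 + hg3 - hg4 - hg5 - hg6 - hg7 - (R.iden11 a1 a2 x1 x2 (N1 x3)) + hg8 - hg9 + hg10 - (lin3 N1 (M.mp3 a2 a1 x1 x2 x3)) + (R.iden9 x2 x3 a2 a1 (N1 x1)) + (R.iden11 a1 a2 x1 x3 (N1 x2)) + hsw0 + hsw1 - hsw2 - hsw3 - hsw4 + hsw5 + hsw6 - hsw7 + hsw8 + hsw9 - hsw10 - hsw11 - hsw12 + hsw13 + hsw14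

set_option maxHeartbeats 4000000 in
set_option linter.unusedTactic false in
private theorem d1_aux7
    {k : Type*} [Field k] {g h V W : Type*}
    [AddCommGroup g] [Module k g] [AddCommGroup h] [Module k h]
    [AddCommGroup V] [Module k V] [AddCommGroup W] [Module k W]
    (M : MatchedPair k g h) (R : MPRep (V := V) (W := W) M)
    (N1 : g →ₗ[k] V) (N2 : h →ₗ[k] W) (c : Cochain2 k g h V W)
    (hd : IsD1 M R.toData N1 N2 c) :
    (∀ (x1 x2 : g) (a1 a2 a3 : h), R.toData.ρW x1 x2 (c.θ a1 a2 a3) + c.ν x1 x2 (M.Lh.br a1 a2 a3) + c.ν (M.ψ.ρ a2 a3 x1) x2 a1 + R.toData.A (c.φ a2 a3 x1) x2 a1 + c.ν x1 (M.ψ.ρ a2 a3 x2) a1 - R.toData.A (c.φ a2 a3 x2) x1 a1 - c.θ (M.ρ.ρ x1 x2 a1) a2 a3 - R.toData.ψW a2 a3 (c.ν x1 x2 a1) = 0) := by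
  obtain ⟨hω, hν, hφ, hθ⟩ := hd
  intro x1 x2 a1 a2 a3
  simp only [MPRep.toData, hω, hν, hφ, hθ, map_add, map_sub, LinearMap.add_apply, LinearMap.sub_apply]
  have hg0 := R.iden22 a1 a2 a3 x1 x2 (N1 x1) (N1 x2) (N2 a2) (N2 a3)
  simp only [map_add, map_sub, map_zero, map_neg, LinearMap.add_apply, LinearMap.sub_apply, LinearMap.zero_apply, LinearMap.neg_apply, add_zero, zero_add, sub_zero, zero_sub, sub_self, neg_zero, neg_neg] at hg0
  have hg1 := R.iden22 a1 a2 a3 x1 x2 0 (N1 x2) 0 0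
  simp only [map_add, map_sub, map_zero, map_neg, LinearMap.add_apply, LinearMap.sub_apply, LinearMap.zero_apply, LinearMap.neg_apply, add_zero, zero_add, sub_zero, zero_sub, sub_self, neg_zero, neg_neg] at hg1
  have hg2 := R.iden22 a1 a2 a3 x2 x1 (N1 x2) 0 0 0
  simp only [map_add, map_sub, map_zero, map_neg, LinearMap.add_apply, LinearMap.sub_apply, LinearMap.zero_apply, LinearMap.neg_apply, add_zero, zero_add, sub_zero, zero_sub, sub_self, neg_zero, neg_neg] at hg2
  have hsw0 : (R.rW.ρ x1 x2 (R.pW.ρ a3 a1 (N2 a2))) = -(R.rW.ρ x1 x2 (R.pW.ρ a1 a3 (N2 a2))) := by (try rw [Rep3.skew' R.pW a3 a1 (N2 a2)]); (try simp only [map_neg, LinearMap.neg_apply, neg_neg])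
  have hsw1 : (R.pW.ρ (M.ρ.ρ x1 x2 a1) a3 (N2 a2)) = -(R.pW.ρ a3 (M.ρ.ρ x1 x2 a1) (N2 a2)) := by (try rw [Rep3.skew' R.pW (M.ρ.ρ x1 x2 a1) a3 (N2 a2)]); (try simp only [map_neg, LinearMap.neg_apply, neg_neg])
  linear_combination (norm := module) - (R.iden23 x1 x2 a1 a2 (N2 a3)) + (R.iden23 x1 x2 a1 a3 (N2 a2)) - (R.iden21 a2 a3 x1 x2 (N2 a1)) - hg0 + (lin3 N2 (M.mp6 x1 x2 a1 a2 a3)) + hg1 + hg2 + hsw0 - hsw1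

set_option maxHeartbeats 4000000 in
set_option linter.unusedTactic false in
private theorem d1_aux8
    {k : Type*} [Field k] {g h V W : Type*}
    [AddCommGroup g] [Module k g] [AddCommGroup h] [Module k h]
    [AddCommGroup V] [Module k V] [AddCommGroup W] [Module k W]
    (M : MatchedPair k g h) (R : MPRep (V := V) (W := W) M)
    (N1 : g →ₗ[k] V) (N2 : h →ₗ[k] W) (c : Cochain2 k g h V W)
    (hd : IsD1 M R.toData N1 N2 c) :
    (∀ a1 a2 a3 a4 a5 : h, R.toData.ψW a4 a5 (c.θ a1 a2 a3) + R.toData.ψW a5 a3 (c.θ a1 a2 a4) + R.toData.ψW a3 a4 (c.θ a1 a2 a5) + c.θ (M.Lh.br a1 a2 a3) a4 a5 + c.θ a3 (M.Lh.br a1 a2 a4) a5 + c.θ a3 a4 (M.Lh.br a1 a2 a5) - R.toData.ψW a1 a2 (c.θ a3 a4 a5) - c.θ a1 a2 (M.Lh.br a3 a4 a5) = 0) := by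
  obtain ⟨hω, hν, hφ, hθ⟩ := hd
  intro a1 a2 a3 a4 a5
  simp only [MPRep.toData, hω, hν, hφ, hθ, map_add, map_sub, LinearMap.add_apply, LinearMap.sub_apply]
  have hsw0 : (R.pW.ρ a4 a5 (R.pW.ρ a3 a1 (N2 a2))) = -(R.pW.ρ a4 a5 (R.pW.ρ a1 a3 (N2 a2))) := by (try rw [Rep3.skew' R.pW a3 a1 (N2 a2)]); (try simp only [map_neg, LinearMap.neg_apply, neg_neg])
  have hsw1 : (R.pW.ρ a5 a3 (R.pW.ρ a2 a4 (N2 a1))) = -(R.pW.ρ a3 a5 (R.pW.ρ a2 a4 (N2 a1))) := by (try rw [Rep3.skew' R.pW a5 a3 (R.pW.ρ a2 a4 (N2 a1))]); (try simp only [map_neg, LinearMap.neg_apply, neg_neg])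
  have hsw2 : (R.pW.ρ a5 a3 (R.pW.ρ a4 a1 (N2 a2))) = (R.pW.ρ a3 a5 (R.pW.ρ a1 a4 (N2 a2))) := by (try rw [Rep3.skew' R.pW a4 a1 (N2 a2)]); (try simp only [map_neg, LinearMap.neg_apply, neg_neg]); (try rw [Rep3.skew' R.pW a5 a3 (R.pW.ρ a1 a4 (N2 a2))]); (try simp only [map_neg, LinearMap.neg_apply, neg_neg])
  have hsw3 : (R.pW.ρ a5 a3 (R.pW.ρ a1 a2 (N2 a4))) = -(R.pW.ρ a3 a5 (R.pW.ρ a1 a2 (N2 a4))) := by (try rw [Rep3.skew' R.pW a5 a3 (R.pW.ρ a1 a2 (N2 a4))]); (try simp only [map_neg, LinearMap.neg_apply, neg_neg])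
  have hsw4 : (R.pW.ρ a3 a4 (R.pW.ρ a5 a1 (N2 a2))) = -(R.pW.ρ a3 a4 (R.pW.ρ a1 a5 (N2 a2))) := by (try rw [Rep3.skew' R.pW a5 a1 (N2 a2)]); (try simp only [map_neg, LinearMap.neg_apply, neg_neg])
  have hsw5 : (R.pW.ρ (M.Lh.br a1 a2 a5) a3 (N2 a4)) = -(R.pW.ρ a3 (M.Lh.br a1 a2 a5) (N2 a4)) := by (try rw [Rep3.skew' R.pW (M.Lh.br a1 a2 a5) a3 (N2 a4)]); (try simp only [map_neg, LinearMap.neg_apply, neg_neg])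
  have hsw6 : (R.pW.ρ a1 a2 (R.pW.ρ a5 a3 (N2 a4))) = -(R.pW.ρ a1 a2 (R.pW.ρ a3 a5 (N2 a4))) := by (try rw [Rep3.skew' R.pW a5 a3 (N2 a4)]); (try simp only [map_neg, LinearMap.neg_apply, neg_neg])
  have hsw7 : (R.pW.ρ (M.Lh.br a3 a4 a5) a1 (N2 a2)) = -(R.pW.ρ a1 (M.Lh.br a3 a4 a5) (N2 a2)) := by (try rw [Rep3.skew' R.pW (M.Lh.br a3 a4 a5) a1 (N2 a2)]); (try simp only [map_neg, LinearMap.neg_apply, neg_neg])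
  have hsw8 : (R.pW.ρ (M.Lh.br a1 a2 a3) a5 (N2 a4)) = -(R.pW.ρ a5 (M.Lh.br a1 a2 a3) (N2 a4)) := by (try rw [Rep3.skew' R.pW (M.Lh.br a1 a2 a3) a5 (N2 a4)]); (try simp only [map_neg, LinearMap.neg_apply, neg_neg])
  have hsw9 : (R.pW.ρ (M.Lh.br a1 a3 a4) a5 (N2 a2)) = -(R.pW.ρ a5 (M.Lh.br a1 a3 a4) (N2 a2)) := by (try rw [Rep3.skew' R.pW (M.Lh.br a1 a3 a4) a5 (N2 a2)]); (try simp only [map_neg, LinearMap.neg_apply, neg_neg])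
  have hsw10 : (R.pW.ρ (M.Lh.br a1 a3 a5) a4 (N2 a2)) = -(R.pW.ρ a4 (M.Lh.br a1 a3 a5) (N2 a2)) := by (try rw [Rep3.skew' R.pW (M.Lh.br a1 a3 a5) a4 (N2 a2)]); (try simp only [map_neg, LinearMap.neg_apply, neg_neg])
  have hsw11 : (R.pW.ρ a1 a3 (R.pW.ρ a5 a4 (N2 a2))) = -(R.pW.ρ a1 a3 (R.pW.ρ a4 a5 (N2 a2))) := by (try rw [Rep3.skew' R.pW a5 a4 (N2 a2)]); (try simp only [map_neg, LinearMap.neg_apply, neg_neg])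
  have hsw12 : (R.pW.ρ a5 a1 (R.pW.ρ a3 a4 (N2 a2))) = -(R.pW.ρ a1 a5 (R.pW.ρ a3 a4 (N2 a2))) := by (try rw [Rep3.skew' R.pW a5 a1 (R.pW.ρ a3 a4 (N2 a2))]); (try simp only [map_neg, LinearMap.neg_apply, neg_neg])
  have hsw13 : (R.pW.ρ (M.Lh.br a2 a3 a4) a5 (N2 a1)) = -(R.pW.ρ a5 (M.Lh.br a2 a3 a4) (N2 a1)) := by (try rw [Rep3.skew' R.pW (M.Lh.br a2 a3 a4) a5 (N2 a1)]); (try simp only [map_neg, LinearMap.neg_apply, neg_neg])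
  have hsw14 : (R.pW.ρ (M.Lh.br a2 a3 a5) a4 (N2 a1)) = -(R.pW.ρ a4 (M.Lh.br a2 a3 a5) (N2 a1)) := by (try rw [Rep3.skew' R.pW (M.Lh.br a2 a3 a5) a4 (N2 a1)]); (try simp only [map_neg, LinearMap.neg_apply, neg_neg])
  have hsw15 : (R.pW.ρ a2 a3 (R.pW.ρ a5 a4 (N2 a1))) = -(R.pW.ρ a2 a3 (R.pW.ρ a4 a5 (N2 a1))) := by (try rw [Rep3.skew' R.pW a5 a4 (N2 a1)]); (try simp only [map_neg, LinearMap.neg_apply, neg_neg])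
  have hsw16 : (R.pW.ρ a5 a2 (R.pW.ρ a3 a4 (N2 a1))) = -(R.pW.ρ a2 a5 (R.pW.ρ a3 a4 (N2 a1))) := by (try rw [Rep3.skew' R.pW a5 a2 (R.pW.ρ a3 a4 (N2 a1))]); (try simp only [map_neg, LinearMap.neg_apply, neg_neg])
  have hsw17 : (R.pW.ρ (M.Lh.br a3 a4 a1) a5 (N2 a2)) = -(R.pW.ρ a5 (M.Lh.br a1 a3 a4) (N2 a2)) := by (try rw [three_swap23 M.Lh a3 a4 a1]); (try simp only [map_neg, LinearMap.neg_apply, neg_neg]); (try rw [three_swap12 M.Lh a3 a1 a4]); (try simp only [map_neg, LinearMap.neg_apply, neg_neg]); (try rw [Rep3.skew' R.pW (M.Lh.br a1 a3 a4) a5 (N2 a2)]); (try simp only [map_neg, LinearMap.neg_apply, neg_neg])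
  have hsw18 : (R.pW.ρ (M.Lh.br a3 a4 a2) a5 (N2 a1)) = -(R.pW.ρ a5 (M.Lh.br a2 a3 a4) (N2 a1)) := by (try rw [three_swap23 M.Lh a3 a4 a2]); (try simp only [map_neg, LinearMap.neg_apply, neg_neg]); (try rw [three_swap12 M.Lh a3 a2 a4]); (try simp only [map_neg, LinearMap.neg_apply, neg_neg]); (try rw [Rep3.skew' R.pW (M.Lh.br a2 a3 a4) a5 (N2 a1)]); (try simp only [map_neg, LinearMap.neg_apply, neg_neg])
  linear_combination (norm := module) - (R.pW.rep1 a1 a2 a3 a4 (N2 a5)) + (lin3 N2 (M.Lh.fund a1 a2 a3 a4 a5)) + (R.pW.rep1 a1 a2 a3 a5 (N2 a4)) - (R.pW.rep1 a1 a2 a4 a5 (N2 a3)) + (R.pW.rep1 a1 a3 a4 a5 (N2 a2)) - (R.pW.rep2 a1 a3 a5 a4 (N2 a2)) - (R.pW.rep1 a2 a3 a4 a5 (N2 a1)) + (R.pW.rep2 a2 a3 a5 a4 (N2 a1)) - (R.pW.rep1 a3 a4 a1 a5 (N2 a2)) + (R.pW.rep1 a3 a4 a2 a5 (N2 a1)) +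 hsw0 + hsw1 + hsw2 + hsw3 + hsw4 + hsw5 - hsw6 - hsw7 + hsw8 + hsw9 + hsw10 - hsw11 - hsw12 - hsw13 - hsw14 + hsw15 + hsw16 - hsw17 + hsw18

/-- For every pair of linear maps `N1 : g → V`, `N2 : h → W`,
the 2-cochain `D₁(N1, N2)` is a 2-cocycle; in particular every 2-coboundary is a
2-cocycle, so the second cohomology group `H²_MPL(g, h; V, W)` is well defined. -/
theorem d1_is_cocycle
    {k : Type*} [Field k] {g h V W : Type*}
    [AddCommGroup g] [Module k g] [AddCommGroup h] [Module k h]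
    [AddCommGroup V] [Module k V] [AddCommGroup W] [Module k W]
    (M : MatchedPair k g h) (R : MPRep (V := V) (W := W) M) :
    (∀ (N1 : g →ₗ[k] V) (N2 : h →ₗ[k] W) (c : Cochain2 k g h V W),
      IsD1 M R.toData N1 N2 c → IsCocycle2 M R.toData c) ∧
    (∀ c : Cochain2 k g h V W, IsCoboundary M R.toData c → IsCocycle2 M R.toData c) := by
  have main : ∀ (N1 : g →ₗ[k] V) (N2 : h →ₗ[k] W) (c : Cochain2 k g h V W),
      IsD1 M R.toData N1 N2 c → IsCocycle2 M R.toData c := fun N1 N2 c hd =>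
    ⟨d1_aux1 M R N1 N2 c hd, d1_aux2 M R N1 N2 c hd, d1_aux3 M R N1 N2 c hd,
     d1_aux4 M R N1 N2 c hd, d1_aux5 M R N1 N2 c hd, d1_aux6 M R N1 N2 c hd,
     d1_aux7 M R N1 N2 c hd, d1_aux8 M R N1 N2 c hd⟩
  refine ⟨main, ?_⟩
  rintro c ⟨N1, N2, hd⟩
  exact main N1 N2 c hd
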